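/- arXiv:physics/9801008 — 3 statements merged into one kernel-verified Lean document; each statement's English description precedes it below -/
import Mathlib

section
/- Conversely, given any real numbers η_{ab}, τ_{ab} (0 ≤ a < b ≤ N), α_k, γ_k (1 ≤ k ≤ N) and β_{kl} (1 ≤ k < l ≤ N) satisfying ω_k·β_{kl} = 0, ω_l·β_{kl} = 0 and ω_k·γ_k = 0, the unique alternating bilinear form ξ on u_ω(N+1) whose values on basis pairs are given by η, τ, α, β on su_ω(N+1) (ξ(J_{ab},J_{ac}) = ξ(M_{ab},M_{ac}) = ω_{ab}η_{bc}, ξ(J_{ab},J_{bc}) = −η_{ac}, ξ(M_{ab},M_{bc}) = η_{ac}, ξ(J_{ac},J_{bc}) = ξ(M_{ac},M_{bc}) = ω_{bc}η_{ab}, ξ(J_{ab},M_{ac}) = ω_{ab}τ_{bc}, ξ(M_{ab},J_{ac}) = −ω_{ab}τ_{bc}, ξ(J_{ab},M_{bc}) = ξ(M_{ab},J_{bc}) = −τ_{ac}, ξ(J_{ac},M_{bc}) = −ω_{bc}τ_{ab}, ξ(M_{ac},J_{bc}) = ω_{bc}τ_{ab}, vanishing on disjoint index pairs, ξ(J_{ab},B_l)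 = κ_{ab,l}·τ_{ab}, ξ(M_{ab},B_l) = −κ_{ab,l}·η_{ab}, ξ(J_{ab},M_{ab}) = Σ_{s=a+1}^{b} ω_{a,s−1}ω_{s,b}·α_s, ξ(B_k,B_l) = β_{kl}) together with ξ(J_{ab},I) = ξ(M_{ab},I) = 0 and ξ(B_k,I) = γ_k, is a 2-cocycle on u_ω(N+1). -/
open Finset

noncomputable section

/-- `ckW ω a b` is the product `ω_{ab} = ω_{a+1} ω_{a+2} ⋯ ω_b` (so `ckW ω a a = 1`). -/
def ckW (ω : ℕ → ℝ) (a b : ℕ) : ℝ := ∏ s ∈ Finset.Icc (a + 1) b, ω s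

/-- `ckKappa a b l = δ_{a,l-1} − δ_{b,l-1} + δ_{b,l} − δ_{a,l}`. -/
def ckKappa (a b l : ℕ) : ℝ :=
  (if a = l - 1 then (1 : ℝ) else 0) - (if b = l - 1 then (1 : ℝ) else 0)
    + (if b = l then (1 : ℝ) else 0) - (if a = l then (1 : ℝ) else 0)

/-- A 2-cocycle on a real Lie algebra: an alternating bilinear form satisfying the
cocycle identity. -/
def IsLieCocycle {L : Type*} [LieRing L] [LieAlgebra ℝ L]
    (ξ : L →ₗ[ℝ] L →ₗ[ℝ] ℝ) : Prop :=
  (∀ x, ξ x x = 0) ∧ ∀ x y z, ξ ⁅x, y⁆ z + ξ ⁅y, z⁆ x + ξ ⁅z, x⁆ y = 0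

/-- A 2-coboundary on a real Lie algebra: the bilinear form `(x, y) ↦ μ ⁅x, y⁆` for a
linear functional `μ`. -/
def IsLieCoboundary {L : Type*} [LieRing L] [LieAlgebra ℝ L]
    (ξ : L →ₗ[ℝ] L →ₗ[ℝ] ℝ) : Prop :=
  ∃ μ : L →ₗ[ℝ] ℝ, ∀ x y, ξ x y = μ ⁅x, y⁆

/-- The commutation relations of the special unitary Cayley–Klein algebra `su_ω(N+1)`
for the generating family `J, M, B`. -/
structure SUBrackets {L : Type*} [LieRing L] [LieAlgebra ℝ L] (N : ℕ) (ω : ℕ → ℝ)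
    (J M : ℕ → ℕ → L) (B : ℕ → L) : Prop where
  jj_left : ∀ a b c, a < b → b < c → c ≤ N → ⁅J a b, J a c⁆ = ckW ω a b • J b c
  jj_mid : ∀ a b c, a < b → b < c → c ≤ N → ⁅J a b, J b c⁆ = -(J a c)
  jj_right : ∀ a b c, a < b → b < c → c ≤ N → ⁅J a c, J b c⁆ = ckW ω b c • J a b
  mm_left : ∀ a b c, a < b → b < c → c ≤ N → ⁅M a b, M a c⁆ = ckW ω a b • J b c
  mm_mid : ∀ a b c, a < b → b < c → c ≤ N → ⁅M a b, M b c⁆ = J a c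
  mm_right : ∀ a b c, a < b → b < c → c ≤ N → ⁅M a c, M b c⁆ = ckW ω b c • J a b
  jm_left : ∀ a b c, a < b → b < c → c ≤ N → ⁅J a b, M a c⁆ = ckW ω a b • M b c
  jm_mid : ∀ a b c, a < b → b < c → c ≤ N → ⁅J a b, M b c⁆ = -(M a c)
  jm_right : ∀ a b c, a < b → b < c → c ≤ N → ⁅J a c, M b c⁆ = -(ckW ω b c • M a b)
  mj_left : ∀ a b c, a < b → b < c → c ≤ N → ⁅M a b, J a c⁆ = -(ckW ω a b • M b c)
  mj_mid : ∀ a b c, a < b → b < c → c ≤ N → ⁅M a b, J b c⁆ = -(M a c)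
  mj_right : ∀ a b c, a < b → b < c → c ≤ N → ⁅M a c, J b c⁆ = ckW ω b c • M a b
  jj_disj : ∀ a b d e, a < b → b ≤ N → d < e → e ≤ N →
    a ≠ d → a ≠ e → b ≠ d → b ≠ e → ⁅J a b, J d e⁆ = 0
  mm_disj : ∀ a b d e, a < b → b ≤ N → d < e → e ≤ N →
    a ≠ d → a ≠ e → b ≠ d → b ≠ e → ⁅M a b, M d e⁆ = 0
  jm_disj : ∀ a b d e, a < b → b ≤ N → d < e → e ≤ N →
    a ≠ d → a ≠ e → b ≠ d → b ≠ e → ⁅J a b, M d e⁆ = 0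
  jb : ∀ a b l, a < b → b ≤ N → 1 ≤ l → l ≤ N → ⁅J a b, B l⁆ = ckKappa a b l • M a b
  mb : ∀ a b l, a < b → b ≤ N → 1 ≤ l → l ≤ N → ⁅M a b, B l⁆ = -(ckKappa a b l • J a b)
  jm_same : ∀ a b, a < b → b ≤ N →
    ⁅J a b, M a b⁆ = (-(2 * ckW ω a b)) • ∑ s ∈ Finset.Icc (a + 1) b, B s
  bb : ∀ k l, 1 ≤ k → k < l → l ≤ N → ⁅B k, B l⁆ = 0

/-- Index predicate for the basis of `su_ω(N+1)`. -/
def suIdxP (N : ℕ) : (ℕ × ℕ) ⊕ ((ℕ × ℕ) ⊕ ℕ) → Prop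
  | Sum.inl (a, b) => a < b ∧ b ≤ N
  | Sum.inr (Sum.inl (a, b)) => a < b ∧ b ≤ N
  | Sum.inr (Sum.inr l) => 1 ≤ l ∧ l ≤ N

/-- Index type for the basis of `su_ω(N+1)`. -/
def SUIdx (N : ℕ) : Type := {x // suIdxP N x}

/-- The basis family `{J_{ab}} ∪ {M_{ab}} ∪ {B_l}` of `su_ω(N+1)`. -/
def suFam {L : Type*} (N : ℕ) (J M : ℕ → ℕ → L) (B : ℕ → L) : SUIdx N → L :=
  fun x =>
    match x.1 with
    | Sum.inl (a, b) => J a b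
    | Sum.inr (Sum.inl (a, b)) => M a b
    | Sum.inr (Sum.inr l) => B l

/-- The family `{J_{ab}} ∪ {M_{ab}} ∪ {B_l}` is a basis of `L`. -/
def SUBasis {L : Type*} [LieRing L] [LieAlgebra ℝ L] (N : ℕ)
    (J M : ℕ → ℕ → L) (B : ℕ → L) : Prop :=
  LinearIndependent ℝ (suFam N J M B) ∧
    ⊤ ≤ Submodule.span ℝ (Set.range (suFam N J M B))

/-- The extra central generator `I` of `u_ω(N+1)` commutes with everything. -/
structure UCentral {L : Type*} [LieRing L] [LieAlgebra ℝ L] (N : ℕ)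
    (J M : ℕ → ℕ → L) (B : ℕ → L) (I : L) : Prop where
  jcen : ∀ a b, a < b → b ≤ N → ⁅J a b, I⁆ = 0
  mcen : ∀ a b, a < b → b ≤ N → ⁅M a b, I⁆ = 0
  bcen : ∀ l, 1 ≤ l → l ≤ N → ⁅B l, I⁆ = 0

/-- Index type for the basis of `u_ω(N+1)`. -/
def UIdx (N : ℕ) : Type := SUIdx N ⊕ Unit

/-- The basis family `{J_{ab}} ∪ {M_{ab}} ∪ {B_l} ∪ {I}` of `u_ω(N+1)`. -/
def uFam {L : Type*} (N : ℕ) (J M : ℕ → ℕ → L) (B : ℕ → L) (I : L) : UIdx N → L :=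
  Sum.elim (suFam N J M B) fun _ => I

/-- The family `{J_{ab}} ∪ {M_{ab}} ∪ {B_l} ∪ {I}` is a basis of `L`. -/
def UBasis {L : Type*} [LieRing L] [LieAlgebra ℝ L] (N : ℕ)
    (J M : ℕ → ℕ → L) (B : ℕ → L) (I : L) : Prop :=
  LinearIndependent ℝ (uFam N J M B I) ∧
    ⊤ ≤ Submodule.span ℝ (Set.range (uFam N J M B I))

/-! ### Auxiliary machinery for the converse cocycle theorem -/

namespace UCocycleAux

/-- Uniform family: `gf J M false = J`, `gf J M true = M`. -/
def gf {L : Type*} (J M : ℕ → ℕ → L) : Bool → ℕ → ℕ → L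
  | false => J
  | true => M

@[simp] lemma gf_false {L : Type*} (J M : ℕ → ℕ → L) : gf J M false = J := rfl
@[simp] lemma gf_true {L : Type*} (J M : ℕ → ℕ → L) : gf J M true = M := rfl

/-- Sign for the pairing `ρ(G_s, G_t)` on equal index pairs. -/
def sg (s t : Bool) : ℝ := if s = t then 0 else if s then -1 else 1
/-- Sign in the `left`-type bracket relations. -/
def s1 (s t : Bool) : ℝ := if s = true ∧ t = false then -1 else 1
/-- Sign in the `mid`-type bracket relations. -/
def s2 (s t : Bool) : ℝ := if s = true ∧ t = true then 1 else -1
/-- Sign in the `right`-type bracket relations. -/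
def s3 (s t : Bool) : ℝ := if s = false ∧ t = true then -1 else 1
/-- Sign in the bracket with the `B` generators. -/
def cs (s : Bool) : ℝ := if s then -1 else 1

/-- The diagonal value `Σ_{s=a+1}^b ω_{a,s-1} ω_{s,b} α_s`. -/
def ckA (ω α : ℕ → ℝ) (a b : ℕ) : ℝ :=
  ∑ s ∈ Finset.Icc (a + 1) b, ckW ω a (s - 1) * ckW ω s b * α s

/-- Signed version of `β`. -/
def sB (β : ℕ → ℕ → ℝ) (k l : ℕ) : ℝ :=
  if k < l then β k l else if l < k then -(β l k) else 0

lemma Icc_succ_eq_Ioc (a b : ℕ) : Finset.Icc (a + 1) b = Finset.Ioc a b := by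
  rw [← Finset.Icc_add_one_left_eq_Ioc]

lemma ckW_mul (ω : ℕ → ℝ) {a b c : ℕ} (h1 : a ≤ b) (h2 : b ≤ c) :
    ckW ω a c = ckW ω a b * ckW ω b c := by
  simp only [ckW, Icc_succ_eq_Ioc]
  exact (Finset.prod_Ioc_consecutive ω h1 h2).symm

lemma ckW_factor (ω : ℕ → ℝ) {a b s : ℕ} (hs : s ∈ Finset.Icc (a + 1) b) (x : ℝ)
    (hx : ω s * x = 0) : ckW ω a b * x = 0 := by
  have h := Finset.mul_prod_erase (Finset.Icc (a + 1) b) ω hs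
  have : ckW ω a b = ω s * ∏ t ∈ (Finset.Icc (a + 1) b).erase s, ω t := h.symm
  rw [this, mul_comm (ω s) _, mul_assoc, hx, mul_zero]

lemma ckA_id (ω α : ℕ → ℝ) {a b c : ℕ} (h1 : a < b) (h2 : b < c) :
    ckA ω α a c = ckW ω b c * ckA ω α a b + ckW ω a b * ckA ω α b c := by
  unfold ckA
  simp only [Icc_succ_eq_Ioc]
  rw [← Finset.sum_Ioc_consecutive _ (le_of_lt h1) (le_of_lt h2)]
  have e1 : ∑ s ∈ Finset.Ioc a b, ckW ω a (s - 1) * ckW ω s c * α s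
      = ckW ω b c * ∑ s ∈ Finset.Ioc a b, ckW ω a (s - 1) * ckW ω s b * α s := by
    rw [Finset.mul_sum]
    refine Finset.sum_congr rfl fun s hs => ?_
    have hsb : s ≤ b := (Finset.mem_Ioc.mp hs).2
    rw [ckW_mul ω hsb (le_of_lt h2)]; ring
  have e2 : ∑ s ∈ Finset.Ioc b c, ckW ω a (s - 1) * ckW ω s c * α s
      = ckW ω a b * ∑ s ∈ Finset.Ioc b c, ckW ω b (s - 1) * ckW ω s c * α s := by
    rw [Finset.mul_sum]
    refine Finset.sum_congr rfl fun s hs => ?_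
    have hbs : b ≤ s - 1 := by have := (Finset.mem_Ioc.mp hs).1; omega
    rw [ckW_mul ω (le_of_lt h1) hbs]; ring
  rw [e1, e2]

section Brackets

variable {L : Type*} [LieRing L] [LieAlgebra ℝ L] {N : ℕ} {ω : ℕ → ℝ}
  {J M : ℕ → ℕ → L} {B : ℕ → L}

lemma gLeft (hbr : SUBrackets N ω J M B) (s t : Bool) {a b c : ℕ}
    (h1 : a < b) (h2 : b < c) (h3 : c ≤ N) :
    ⁅gf J M s a b, gf J M t a c⁆ = (s1 s t * ckW ω a b) • gf J M (xor s t) b c := by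
  cases s <;> cases t <;>
    simp [s1, hbr.jj_left a b c h1 h2 h3, hbr.jm_left a b c h1 h2 h3,
      hbr.mj_left a b c h1 h2 h3, hbr.mm_left a b c h1 h2 h3, neg_smul]

lemma gMid (hbr : SUBrackets N ω J M B) (s t : Bool) {a b c : ℕ}
    (h1 : a < b) (h2 : b < c) (h3 : c ≤ N) :
    ⁅gf J M s a b, gf J M t b c⁆ = s2 s t • gf J M (xor s t) a c := by
  cases s <;> cases t <;>
    simp [s2, hbr.jj_mid a b c h1 h2 h3, hbr.jm_mid a b c h1 h2 h3,
      hbr.mj_mid a b c h1 h2 h3, hbr.mm_mid a b c h1 h2 h3, neg_smul]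

lemma gRight (hbr : SUBrackets N ω J M B) (s t : Bool) {a b c : ℕ}
    (h1 : a < b) (h2 : b < c) (h3 : c ≤ N) :
    ⁅gf J M s a c, gf J M t b c⁆ = (s3 s t * ckW ω b c) • gf J M (xor s t) a b := by
  cases s <;> cases t <;>
    simp [s3, hbr.jj_right a b c h1 h2 h3, hbr.jm_right a b c h1 h2 h3,
      hbr.mj_right a b c h1 h2 h3, hbr.mm_right a b c h1 h2 h3, neg_smul]

lemma gDisj (hbr : SUBrackets N ω J M B) (s t : Bool) {a b d e : ℕ}
    (h1 : a < b) (h2 : b ≤ N) (h3 : d < e) (h4 : e ≤ N)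
    (n1 : a ≠ d) (n2 : a ≠ e) (n3 : b ≠ d) (n4 : b ≠ e) :
    ⁅gf J M s a b, gf J M t d e⁆ = 0 := by
  have hmj : ⁅M a b, J d e⁆ = 0 := by
    rw [← lie_skew, hbr.jm_disj d e a b h3 h4 h1 h2 n1.symm n3.symm n2.symm n4.symm, neg_zero]
  cases s <;> cases t <;>
    simp [hbr.jj_disj a b d e h1 h2 h3 h4 n1 n2 n3 n4,
      hbr.jm_disj a b d e h1 h2 h3 h4 n1 n2 n3 n4,
      hbr.mm_disj a b d e h1 h2 h3 h4 n1 n2 n3 n4, hmj]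

lemma gB (hbr : SUBrackets N ω J M B) (s : Bool) {a b l : ℕ}
    (h1 : a < b) (h2 : b ≤ N) (h3 : 1 ≤ l) (h4 : l ≤ N) :
    ⁅gf J M s a b, B l⁆ = (cs s * ckKappa a b l) • gf J M (!s) a b := by
  cases s <;>
    simp [cs, hbr.jb a b l h1 h2 h3 h4, hbr.mb a b l h1 h2 h3 h4, neg_smul, mul_comm]

lemma bbTot (hbr : SUBrackets N ω J M B) {k l : ℕ}
    (hk1 : 1 ≤ k) (hk2 : k ≤ N) (hl1 : 1 ≤ l) (hl2 : l ≤ N) : ⁅B k, B l⁆ = 0 := by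
  rcases lt_trichotomy k l with h | rfl | h
  · exact hbr.bb k l hk1 h hl2
  · exact lie_self _
  · rw [← lie_skew, hbr.bb l k hl1 h hk2, neg_zero]

/-- Complete case analysis for a bracket of two `G`-generators on distinct index
pairs: it is `0` or a multiple of a single `G`-generator on the "third" pair. -/
lemma brCases (hbr : SUBrackets N ω J M B) (s t : Bool) {a b d e : ℕ}
    (h1 : a < b) (h2 : b ≤ N) (h3 : d < e) (h4 : e ≤ N) :
    (a = d ∧ b = e) ∨ ⁅gf J M s a b, gf J M t d e⁆ = 0 ∨
    ∃ (r : ℝ) (v : Bool) (p q : ℕ), p < q ∧ q ≤ N ∧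
      ⁅gf J M s a b, gf J M t d e⁆ = r • gf J M v p q ∧
      ((b = d ∧ p = a ∧ q = e) ∨ (a = d ∧ p = b ∧ q = e) ∨ (a = d ∧ p = e ∧ q = b) ∨
       (b = e ∧ p = a ∧ q = d) ∨ (b = e ∧ p = d ∧ q = a) ∨ (e = a ∧ p = d ∧ q = b)) := by
  by_cases hEq : a = d ∧ b = e
  · exact Or.inl hEq
  right
  rcases lt_trichotomy a d with h | rfl | h
  · rcases lt_trichotomy b d with hb | rfl | hb
    · exact Or.inl (gDisj hbr s t h1 h2 h3 h4 (by omega) (by omega) (by omega) (by omega))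
    · exact Or.inr ⟨s2 s t, xor s t, a, e, by omega, h4,
        gMid hbr s t h1 h3 h4, Or.inl ⟨rfl, rfl, rfl⟩⟩
    · rcases lt_trichotomy b e with hbe | rfl | hbe
      · exact Or.inl (gDisj hbr s t h1 h2 h3 h4 (by omega) (by omega) (by omega) (by omega))
      · exact Or.inr ⟨s3 s t * ckW ω d b, xor s t, a, d, h, by omega,
          gRight hbr s t h h3 h2, Or.inr (Or.inr (Or.inr (Or.inl ⟨rfl, rfl, rfl⟩)))⟩
      · exact Or.inl (gDisj hbr s t h1 h2 h3 h4 (by omega) (by omega) (by omega) (by omega))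
  · rcases lt_trichotomy b e with hbe | rfl | hbe
    · exact Or.inr ⟨s1 s t * ckW ω a b, xor s t, b, e, hbe, h4,
        gLeft hbr s t h1 hbe h4, Or.inr (Or.inl ⟨rfl, rfl, rfl⟩)⟩
    · exact absurd ⟨rfl, rfl⟩ hEq
    · refine Or.inr ⟨-(s1 t s * ckW ω a e), xor t s, e, b, hbe, h2, ?_,
        Or.inr (Or.inr (Or.inl ⟨rfl, rfl, rfl⟩))⟩
      rw [← lie_skew, gLeft hbr t s h3 hbe h2, neg_smul]
  · rcases lt_trichotomy e a with he | rfl | he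
    · exact Or.inl (gDisj hbr s t h1 h2 h3 h4 (by omega) (by omega) (by omega) (by omega))
    · refine Or.inr ⟨-(s2 t s), xor t s, d, b, by omega, h2, ?_,
        Or.inr (Or.inr (Or.inr (Or.inr (Or.inr ⟨rfl, rfl, rfl⟩))))⟩
      rw [← lie_skew, gMid hbr t s h3 h1 h2, neg_smul]
    · rcases lt_trichotomy e b with h' | rfl | h'
      · exact Or.inl (gDisj hbr s t h1 h2 h3 h4 (by omega) (by omega) (by omega) (by omega))
      · refine Or.inr ⟨-(s3 t s * ckW ω a e), xor t s, d, a, h, by omega, ?_,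
          Or.inr (Or.inr (Or.inr (Or.inr (Or.inl ⟨rfl, rfl, rfl⟩))))⟩
        rw [← lie_skew, gRight hbr t s h he h2, neg_smul]
      · exact Or.inl (gDisj hbr s t h1 h2 h3 h4 (by omega) (by omega) (by omega) (by omega))

end Brackets

/-- The cyclic cocycle expression for a bilinear form `P`. -/
def cPf {L : Type*} [LieRing L] [LieAlgebra ℝ L] (P : L →ₗ[ℝ] L →ₗ[ℝ] ℝ) (x y z : L) : ℝ :=
  P ⁅x, y⁆ z + P ⁅y, z⁆ x + P ⁅z, x⁆ y

lemma ccyc {L : Type*} [LieRing L] [LieAlgebra ℝ L] (P : L →ₗ[ℝ] L →ₗ[ℝ] ℝ) (x y z : L) :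
    cPf P x y z = cPf P y z x := by
  unfold cPf; ring

lemma cswap12 {L : Type*} [LieRing L] [LieAlgebra ℝ L] (P : L →ₗ[ℝ] L →ₗ[ℝ] ℝ) (x y z : L) :
    cPf P x y z = -cPf P y x z := by
  unfold cPf
  have e1 : ⁅y, x⁆ = -⁅x, y⁆ := by rw [← lie_skew]
  have e2 : ⁅x, z⁆ = -⁅z, x⁆ := by rw [← lie_skew]
  have e3 : ⁅z, y⁆ = -⁅y, z⁆ := by rw [← lie_skew]
  rw [e1, e2, e3]; simp only [map_neg, LinearMap.neg_apply]; ring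

lemma cswap23 {L : Type*} [LieRing L] [LieAlgebra ℝ L] (P : L →ₗ[ℝ] L →ₗ[ℝ] ℝ) (x y z : L) :
    cPf P x y z = -cPf P x z y := by
  rw [ccyc, cswap12, ← ccyc]

end UCocycleAux

namespace UCocycleAux

section Terms

variable {L : Type*} [LieRing L] [LieAlgebra ℝ L] {N : ℕ} {ω : ℕ → ℝ}
  {J M : ℕ → ℕ → L} {B : ℕ → L}

/-- A single cocycle term vanishes whenever the third generator is "orthogonal"
to everything the bracket can produce. -/
lemma termZeroZ (hbr : SUBrackets N ω J M B) (P : L →ₗ[ℝ] L →ₗ[ℝ] ℝ) (z : L)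
    (hGz : ∀ (v : Bool) (p q : ℕ), p < q → q ≤ N → P (gf J M v p q) z = 0)
    (hBz : ∀ (a b : ℕ), a < b → b ≤ N →
      ∀ s' ∈ Finset.Icc (a + 1) b, ckW ω a b * P (B s') z = 0)
    (s t : Bool) {a b d e : ℕ}
    (h1 : a < b) (h2 : b ≤ N) (h3 : d < e) (h4 : e ≤ N) :
    P ⁅gf J M s a b, gf J M t d e⁆ z = 0 := by
  rcases brCases hbr s t h1 h2 h3 h4 with ⟨rfl, rfl⟩ | hz | ⟨r, v, p, q, hpq, hqN, heq, hrel⟩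
  · by_cases hst : s = t
    · subst hst; rw [lie_self, map_zero, LinearMap.zero_apply]
    · have key : P ⁅J a b, M a b⁆ z = 0 := by
        rw [hbr.jm_same a b h1 h2, map_smul, LinearMap.smul_apply, smul_eq_mul, map_sum,
          LinearMap.sum_apply, Finset.mul_sum]
        refine Finset.sum_eq_zero fun s' hs' => ?_
        have h0 := hBz a b h1 h2 s' hs'
        linear_combination (-2 : ℝ) * h0
      cases s <;> cases t
      · exact absurd rfl hst
      · exact key
      · have e : (⁅gf J M true a b, gf J M false a b⁆ : L)
            = -⁅gf J M false a b, gf J M true a b⁆ := by rw [← lie_skew]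
        rw [e, map_neg, LinearMap.neg_apply]
        simp only [gf_false, gf_true]
        rw [key, neg_zero]
      · exact absurd rfl hst
  · rw [hz, map_zero, LinearMap.zero_apply]
  · rw [heq, map_smul, LinearMap.smul_apply, smul_eq_mul, hGz v p q hpq hqN, mul_zero]

/-- A single cocycle term with three `G`-generators, non-triangle case. -/
lemma termZero (hbr : SUBrackets N ω J M B) (P : L →ₗ[ℝ] L →ₗ[ℝ] ℝ) (Av : ℕ → ℕ → ℝ)
    (PG : ∀ (s t : Bool) (a b d e : ℕ), a < b → b ≤ N → d < e → e ≤ N →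
      P (gf J M s a b) (gf J M t d e) = sg s t * (if a = d ∧ b = e then Av a b else 0))
    (PBG : ∀ (l : ℕ) (v : Bool) (p q : ℕ), 1 ≤ l → l ≤ N → p < q → q ≤ N →
      P (B l) (gf J M v p q) = 0)
    (s t u : Bool) {a b d e f g : ℕ}
    (h1 : a < b) (h2 : b ≤ N) (h3 : d < e) (h4 : e ≤ N) (h5 : f < g) (h6 : g ≤ N)
    (H1 : ¬(b = d ∧ a = f ∧ e = g))
    (H2 : ¬(a = d ∧ ((b = f ∧ e = g) ∨ (e = f ∧ b = g))))
    (H3 : ¬(b = e ∧ ((a = f ∧ d = g) ∨ (d = f ∧ a = g))))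
    (H4 : ¬(e = a ∧ d = f ∧ b = g)) :
    P ⁅gf J M s a b, gf J M t d e⁆ (gf J M u f g) = 0 := by
  rcases brCases hbr s t h1 h2 h3 h4 with ⟨rfl, rfl⟩ | hz | ⟨r, v, p, q, hpq, hqN, heq, hrel⟩
  · by_cases hst : s = t
    · subst hst; rw [lie_self, map_zero, LinearMap.zero_apply]
    · have key : P ⁅J a b, M a b⁆ (gf J M u f g) = 0 := by
        rw [hbr.jm_same a b h1 h2, map_smul, LinearMap.smul_apply, smul_eq_mul, map_sum,
          LinearMap.sum_apply, Finset.sum_eq_zero, mul_zero]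
        intro s' hs'
        have hm := Finset.mem_Icc.mp hs'
        exact PBG s' u f g (by omega) (by omega) h5 h6
      cases s <;> cases t
      · exact absurd rfl hst
      · exact key
      · have e : (⁅gf J M true a b, gf J M false a b⁆ : L)
            = -⁅gf J M false a b, gf J M true a b⁆ := by rw [← lie_skew]
        rw [e, map_neg, LinearMap.neg_apply]
        simp only [gf_false, gf_true]
        rw [key, neg_zero]
      · exact absurd rfl hst
  · rw [hz, map_zero, LinearMap.zero_apply]
  · rw [heq, map_smul, LinearMap.smul_apply, smul_eq_mul, PG v u p q f g hpq hqN h5 h6,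
      if_neg (by omega), mul_zero, mul_zero]

end Terms

end UCocycleAux

namespace UCocycleAux

section Tri

variable {L : Type*} [LieRing L] [LieAlgebra ℝ L] {N : ℕ} {ω : ℕ → ℝ}
  {J M : ℕ → ℕ → L} {B : ℕ → L}

/-- The triangle case of the cocycle identity for three `G`-generators. -/
lemma cTri (hbr : SUBrackets N ω J M B) (P : L →ₗ[ℝ] L →ₗ[ℝ] ℝ) (Av : ℕ → ℕ → ℝ)
    (PG : ∀ (s t : Bool) (a b d e : ℕ), a < b → b ≤ N → d < e → e ≤ N →
      P (gf J M s a b) (gf J M t d e) = sg s t * (if a = d ∧ b = e then Av a b else 0))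
    (hA : ∀ a b c : ℕ, a < b → b < c →
      Av a c = ckW ω b c * Av a b + ckW ω a b * Av b c)
    (s t u : Bool) {a b c : ℕ} (h1 : a < b) (h2 : b < c) (h3 : c ≤ N) :
    cPf P (gf J M s a b) (gf J M t a c) (gf J M u b c) = 0 := by
  unfold cPf
  have e3 : ⁅gf J M u b c, gf J M s a b⁆ = (-(s2 s u)) • gf J M (xor s u) a c := by
    rw [← lie_skew, gMid hbr s u h1 h2 h3, neg_smul]
  rw [gLeft hbr s t h1 h2 h3, gRight hbr t u h1 h2 h3, e3,
    map_smul, map_smul, map_smul, LinearMap.smul_apply, LinearMap.smul_apply,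
    LinearMap.smul_apply, smul_eq_mul, smul_eq_mul, smul_eq_mul,
    PG (xor s t) u b c b c h2 h3 h2 h3,
    PG (xor t u) s a b a b h1 (by omega) h1 (by omega),
    PG (xor s u) t a c a c (by omega) h3 (by omega) h3,
    if_pos (⟨rfl, rfl⟩ : b = b ∧ c = c),
    if_pos (⟨rfl, rfl⟩ : a = a ∧ b = b),
    if_pos (⟨rfl, rfl⟩ : a = a ∧ c = c),
    hA a b c h1 h2]
  cases s <;> cases t <;> cases u <;>
    simp only [sg, s1, s2, s3, Bool.xor_false, Bool.xor_true, Bool.false_xor, Bool.true_xor,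
      Bool.not_true, Bool.not_false, if_true, if_false, and_self, and_true, true_and,
      Bool.true_eq_false, Bool.false_eq_true, if_neg, ite_true, ite_false, reduceIte] <;>
    ring

/-- The cocycle identity for three `G`-generators. -/
lemma cGGG (hbr : SUBrackets N ω J M B) (P : L →ₗ[ℝ] L →ₗ[ℝ] ℝ) (Av : ℕ → ℕ → ℝ)
    (PG : ∀ (s t : Bool) (a b d e : ℕ), a < b → b ≤ N → d < e → e ≤ N →
      P (gf J M s a b) (gf J M t d e) = sg s t * (if a = d ∧ b = e then Av a b else 0))
    (PBG : ∀ (l : ℕ) (v : Bool) (p q : ℕ), 1 ≤ l → l ≤ N → p < q → q ≤ N →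
      P (B l) (gf J M v p q) = 0)
    (hA : ∀ a b c : ℕ, a < b → b < c →
      Av a c = ckW ω b c * Av a b + ckW ω a b * Av b c)
    (s t u : Bool) {a b d e f g : ℕ}
    (h1 : a < b) (h2 : b ≤ N) (h3 : d < e) (h4 : e ≤ N) (h5 : f < g) (h6 : g ≤ N) :
    cPf P (gf J M s a b) (gf J M t d e) (gf J M u f g) = 0 := by
  by_cases hT : (a = d ∧ b = f ∧ e = g) ∨ (a = f ∧ b = d ∧ e = g) ∨
      (a = d ∧ e = f ∧ b = g) ∨ (e = a ∧ d = f ∧ b = g) ∨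
      (b = e ∧ a = f ∧ d = g) ∨ (b = e ∧ d = f ∧ a = g)
  · rcases hT with ⟨rfl, rfl, rfl⟩ | ⟨rfl, rfl, rfl⟩ | ⟨rfl, rfl, rfl⟩ |
      ⟨rfl, rfl, rfl⟩ | ⟨rfl, rfl, rfl⟩ | ⟨rfl, rfl, rfl⟩
    · exact cTri hbr P Av PG hA s t u h1 h5 h6
    · rw [cswap23, cTri hbr P Av PG hA s u t h1 h3 h4, neg_zero]
    · rw [cswap12, cTri hbr P Av PG hA t s u h3 h5 h6, neg_zero]
    · rw [ccyc, cTri hbr P Av PG hA t u s h3 h1 h2]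
    · rw [ccyc, ccyc, cTri hbr P Av PG hA u s t h5 h3 h2]
    · rw [ccyc, cswap12, cTri hbr P Av PG hA u t s h5 h1 h2, neg_zero]
  · simp only [not_or] at hT
    obtain ⟨nA, nB, nC, nD, nE, nF⟩ := hT
    unfold cPf
    rw [termZero hbr P Av PG PBG s t u h1 h2 h3 h4 h5 h6
        (by omega) (by omega) (by omega) (by omega),
      termZero hbr P Av PG PBG t u s h3 h4 h5 h6 h1 h2
        (by omega) (by omega) (by omega) (by omega),
      termZero hbr P Av PG PBG u s t h5 h6 h1 h2 h3 h4
        (by omega) (by omega) (by omega) (by omega)]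
    norm_num

end Tri

end UCocycleAux

namespace UCocycleAux

/-- Values of the auxiliary functional `μ` on the basis. -/
def vfun (N : ℕ) (η τ : ℕ → ℕ → ℝ) : SUIdx N ⊕ Unit → ℝ
  | Sum.inl ⟨Sum.inl (a, b), _⟩ => η a b
  | Sum.inl ⟨Sum.inr (Sum.inl (a, b)), _⟩ => τ a b
  | _ => 0

/-- Predicate singling out the generators of `u_ω(N+1)`. -/
def GenX {L : Type*} (N : ℕ) (J M : ℕ → ℕ → L) (B : ℕ → L) (I : L) (x : L) : Prop :=
  (∃ (s : Bool) (a b : ℕ), a < b ∧ b ≤ N ∧ x = gf J M s a b) ∨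
    (∃ l, 1 ≤ l ∧ l ≤ N ∧ x = B l) ∨ x = I

end UCocycleAux

open UCocycleAux


theorem u_cocycle_converse {L : Type*} [LieRing L] [LieAlgebra ℝ L]
    (N : ℕ) (hN : 1 ≤ N) (ω : ℕ → ℝ) (J M : ℕ → ℕ → L) (B : ℕ → L) (I : L)
    (hbr : SUBrackets N ω J M B) (hcen : UCentral N J M B I) (hbasis : UBasis N J M B I)
    (η τ : ℕ → ℕ → ℝ) (α γ : ℕ → ℝ) (β : ℕ → ℕ → ℝ)
    (hβ : (∀ k l, 1 ≤ k → k < l → l ≤ N → ω k * β k l = 0 ∧ ω l * β k l = 0))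
    (hγ : (∀ k, 1 ≤ k → k ≤ N → ω k * γ k = 0))
    (ξ : L →ₗ[ℝ] L →ₗ[ℝ] ℝ) (halt : ∀ x, ξ x x = 0)
    (hv1 : (∀ a b c, a < b → b < c → c ≤ N →
        ξ (J a b) (J a c) = ckW ω a b * η b c ∧
        ξ (M a b) (M a c) = ckW ω a b * η b c ∧
        ξ (J a b) (J b c) = -(η a c) ∧
        ξ (M a b) (M b c) = η a c ∧
        ξ (J a c) (J b c) = ckW ω b c * η a b ∧
        ξ (M a c) (M b c) = ckW ω b c * η a b ∧
        ξ (J a b) (M a c) = ckW ω a b * τ b c ∧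
        ξ (M a b) (J a c) = -(ckW ω a b * τ b c) ∧
        ξ (J a b) (M b c) = -(τ a c) ∧
        ξ (M a b) (J b c) = -(τ a c) ∧
        ξ (J a c) (M b c) = -(ckW ω b c * τ a b) ∧
        ξ (M a c) (J b c) = ckW ω b c * τ a b))
    (hv2 : (∀ a b d e, a < b → b ≤ N → d < e → e ≤ N → a ≠ d → a ≠ e → b ≠ d → b ≠ e →
        ξ (J a b) (J d e) = 0 ∧ ξ (M a b) (M d e) = 0 ∧ ξ (J a b) (M d e) = 0))
    (hv3 : (∀ a b l, a < b → b ≤ N → 1 ≤ l → l ≤ N →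
        ξ (J a b) (B l) = ckKappa a b l * τ a b ∧
        ξ (M a b) (B l) = -(ckKappa a b l * η a b)))
    (hv4 : (∀ a b, a < b → b ≤ N →
        ξ (J a b) (M a b) = ∑ s ∈ Finset.Icc (a + 1) b, ckW ω a (s - 1) * ckW ω s b * α s))
    (hv5 : (∀ k l, 1 ≤ k → k < l → l ≤ N → ξ (B k) (B l) = β k l))
    (hv6 : (∀ a b, a < b → b ≤ N → ξ (J a b) I = 0 ∧ ξ (M a b) I = 0) ∧
      (∀ k, 1 ≤ k → k ≤ N → ξ (B k) I = γ k)) :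
    IsLieCocycle ξ := by
  classical
  obtain ⟨hli, hsp⟩ := hbasis
  refine ⟨halt, ?_⟩
  -- the auxiliary linear functional μ
  set μ : L →ₗ[ℝ] ℝ := (Module.Basis.mk hli hsp).constr ℝ (vfun N η τ) with hμ
  have muJ : ∀ a b, a < b → b ≤ N → μ (J a b) = η a b := by
    intro a b ha hb
    have h : J a b = (Module.Basis.mk hli hsp) (Sum.inl ⟨Sum.inl (a, b), ⟨ha, hb⟩⟩) := by
      exact (Module.Basis.mk_apply hli hsp (Sum.inl ⟨Sum.inl (a, b), ⟨ha, hb⟩⟩)).symm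
    rw [h, hμ]; exact Module.Basis.constr_basis _ _ _ _
  have muM : ∀ a b, a < b → b ≤ N → μ (M a b) = τ a b := by
    intro a b ha hb
    have h : M a b = (Module.Basis.mk hli hsp) (Sum.inl ⟨Sum.inr (Sum.inl (a, b)), ⟨ha, hb⟩⟩) := by
      exact (Module.Basis.mk_apply hli hsp (Sum.inl ⟨Sum.inr (Sum.inl (a, b)), ⟨ha, hb⟩⟩)).symm
    rw [h, hμ]; exact Module.Basis.constr_basis _ _ _ _
  have muB : ∀ l, 1 ≤ l → l ≤ N → μ (B l) = 0 := by
    intro l hl1 hl2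
    have h : B l = (Module.Basis.mk hli hsp) (Sum.inl ⟨Sum.inr (Sum.inr l), ⟨hl1, hl2⟩⟩) := by
      exact (Module.Basis.mk_apply hli hsp (Sum.inl ⟨Sum.inr (Sum.inr l), ⟨hl1, hl2⟩⟩)).symm
    rw [h, hμ]; exact Module.Basis.constr_basis _ _ _ _
  -- the bilinear form P = ξ - δμ
  set P : L →ₗ[ℝ] L →ₗ[ℝ] ℝ := ξ - LinearMap.mk₂ ℝ (fun x y => μ ⁅x, y⁆)
    (fun x x' y => by rw [add_lie, map_add])
    (fun r x y => by rw [smul_lie, map_smul])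
    (fun x y y' => by rw [lie_add, map_add])
    (fun r x y => by rw [lie_smul, map_smul]) with hPdef
  have hPapp : ∀ x y, P x y = ξ x y - μ ⁅x, y⁆ := fun x y => rfl
  have hPalt : ∀ x, P x x = 0 := by
    intro x; rw [hPapp, halt, lie_self, map_zero, sub_zero]
  have hPskew : ∀ x y, P x y = -P y x := by
    intro x y
    have h := hPalt (x + y)
    simp only [map_add, LinearMap.add_apply] at h
    rw [hPalt, hPalt] at h
    linarith
  have hξskew : ∀ x y, ξ x y = -ξ y x := by
    intro x y
    have h := halt (x + y)
    simp only [map_add, LinearMap.add_apply] at h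
    rw [halt, halt] at h
    linarith
  -- values of P on pairs of basis vectors
  have hJM : ∀ a b, a < b → b ≤ N → P (J a b) (M a b) = ckA ω α a b := by
    intro a b ha hb
    have hz : ∀ s' ∈ Finset.Icc (a + 1) b, μ (B s') = 0 := by
      intro s' hs'
      have hm := Finset.mem_Icc.mp hs'
      exact muB s' (by omega) (by omega)
    rw [hPapp, hbr.jm_same a b ha hb, map_smul, smul_eq_mul, map_sum,
      Finset.sum_eq_zero hz, mul_zero, sub_zero, hv4 a b ha hb]
    rfl
  have hL : ∀ (s t : Bool) (a b c : ℕ), a < b → b < c → c ≤ N →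
      P (gf J M s a b) (gf J M t a c) = 0 := by
    intro s t a b c ha hb hc
    obtain ⟨x1, x2, x3, x4, x5, x6, x7, x8, x9, x10, x11, x12⟩ := hv1 a b c ha hb hc
    have mj : μ (J b c) = η b c := muJ b c hb hc
    have mm : μ (M b c) = τ b c := muM b c hb hc
    cases s <;> cases t <;> rw [hPapp] <;>
      simp [hbr.jj_left a b c ha hb hc, hbr.jm_left a b c ha hb hc,
        hbr.mj_left a b c ha hb hc, hbr.mm_left a b c ha hb hc,
        x1, x2, x7, x8, mj, mm, map_smul, smul_eq_mul]
  have hMid : ∀ (s t : Bool) (a b c : ℕ), a < b → b < c → c ≤ N →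
      P (gf J M s a b) (gf J M t b c) = 0 := by
    intro s t a b c ha hb hc
    obtain ⟨x1, x2, x3, x4, x5, x6, x7, x8, x9, x10, x11, x12⟩ := hv1 a b c ha hb hc
    have mj : μ (J a c) = η a c := muJ a c (ha.trans hb) hc
    have mm : μ (M a c) = τ a c := muM a c (ha.trans hb) hc
    cases s <;> cases t <;> rw [hPapp] <;>
      simp [hbr.jj_mid a b c ha hb hc, hbr.jm_mid a b c ha hb hc,
        hbr.mj_mid a b c ha hb hc, hbr.mm_mid a b c ha hb hc,
        x3, x4, x9, x10, mj, mm]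
  have hR : ∀ (s t : Bool) (a b c : ℕ), a < b → b < c → c ≤ N →
      P (gf J M s a c) (gf J M t b c) = 0 := by
    intro s t a b c ha hb hc
    obtain ⟨x1, x2, x3, x4, x5, x6, x7, x8, x9, x10, x11, x12⟩ := hv1 a b c ha hb hc
    have mj : μ (J a b) = η a b := muJ a b ha (by omega)
    have mm : μ (M a b) = τ a b := muM a b ha (by omega)
    cases s <;> cases t <;> rw [hPapp] <;>
      simp [hbr.jj_right a b c ha hb hc, hbr.jm_right a b c ha hb hc,
        hbr.mj_right a b c ha hb hc, hbr.mm_right a b c ha hb hc,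
        x5, x6, x11, x12, mj, mm, map_smul, smul_eq_mul]
  have hD : ∀ (s t : Bool) (a b d e : ℕ), a < b → b ≤ N → d < e → e ≤ N →
      a ≠ d → a ≠ e → b ≠ d → b ≠ e → P (gf J M s a b) (gf J M t d e) = 0 := by
    intro s t a b d e h1 h2 h3 h4 n1 n2 n3 n4
    obtain ⟨y1, y2, y3⟩ := hv2 a b d e h1 h2 h3 h4 n1 n2 n3 n4
    have z3 := (hv2 d e a b h3 h4 h1 h2 n1.symm n3.symm n2.symm n4.symm).2.2
    have hbz := gDisj hbr s t h1 h2 h3 h4 n1 n2 n3 n4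
    rw [hPapp, hbz, map_zero, sub_zero]
    cases s <;> cases t
    · exact y1
    · exact y3
    · rw [hξskew]; simp only [gf_false, gf_true]; rw [z3, neg_zero]
    · exact y2
  have PG : ∀ (s t : Bool) (a b d e : ℕ), a < b → b ≤ N → d < e → e ≤ N →
      P (gf J M s a b) (gf J M t d e)
        = sg s t * (if a = d ∧ b = e then ckA ω α a b else 0) := by
    intro s t a b d e h1 h2 h3 h4
    by_cases hEq : a = d ∧ b = e
    · obtain ⟨rfl, rfl⟩ := hEq
      rw [if_pos ⟨rfl, rfl⟩]
      cases s <;> cases t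
      · simp [sg, hPalt]
      · simp only [gf_false, gf_true, sg]
        rw [hJM a b h1 h2]; norm_num
      · simp only [gf_false, gf_true, sg]
        rw [hPskew, hJM a b h1 h2]; norm_num
      · simp [sg, hPalt]
    · rw [if_neg hEq, mul_zero]
      rcases lt_trichotomy a d with h | rfl | h
      · rcases lt_trichotomy b d with hb | rfl | hb
        · exact hD s t a b d e h1 h2 h3 h4 (by omega) (by omega) (by omega) (by omega)
        · exact hMid s t a b e h1 h3 h4
        · rcases lt_trichotomy b e with hbe | rfl | hbe
          · exact hD s t a b d e h1 h2 h3 h4 (by omega) (by omega) (by omega) (by omega)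
          · exact hR s t a d b h hb h2
          · exact hD s t a b d e h1 h2 h3 h4 (by omega) (by omega) (by omega) (by omega)
      · rcases lt_trichotomy b e with hbe | rfl | hbe
        · exact hL s t a b e h1 hbe h4
        · exact absurd ⟨rfl, rfl⟩ hEq
        · rw [hPskew, hL t s a e b h3 hbe h2, neg_zero]
      · rcases lt_trichotomy e a with he | rfl | he
        · rw [hPskew, hD t s d e a b h3 h4 h1 h2 (by omega) (by omega) (by omega) (by omega),
            neg_zero]
        · rw [hPskew, hMid t s d e b h3 h1 h2, neg_zero]
        · rcases lt_trichotomy e b with h' | rfl | h'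
          · rw [hPskew, hD t s d e a b h3 h4 h1 h2 (by omega) (by omega) (by omega) (by omega),
              neg_zero]
          · rw [hPskew, hR t s d a e h he h4, neg_zero]
          · rw [hPskew, hD t s d e a b h3 h4 h1 h2 (by omega) (by omega) (by omega) (by omega),
              neg_zero]
  have PGB : ∀ (s : Bool) (a b l : ℕ), a < b → b ≤ N → 1 ≤ l → l ≤ N →
      P (gf J M s a b) (B l) = 0 := by
    intro s a b l h1 h2 h3 h4
    obtain ⟨w1, w2⟩ := hv3 a b l h1 h2 h3 h4
    cases s
    · rw [hPapp]
      simp only [gf_false]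
      rw [hbr.jb a b l h1 h2 h3 h4, map_smul, smul_eq_mul, muM a b h1 h2, w1]
      ring
    · rw [hPapp]
      simp only [gf_true]
      rw [hbr.mb a b l h1 h2 h3 h4, map_neg, map_smul, smul_eq_mul, muJ a b h1 h2, w2]
      ring
  have PBG : ∀ (l : ℕ) (v : Bool) (p q : ℕ), 1 ≤ l → l ≤ N → p < q → q ≤ N →
      P (B l) (gf J M v p q) = 0 := by
    intro l v p q hl1 hl2 hp hq
    rw [hPskew, PGB v p q l hp hq hl1 hl2, neg_zero]
  have PBB : ∀ k l, 1 ≤ k → k ≤ N → 1 ≤ l → l ≤ N → P (B k) (B l) = sB β k l := by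
    intro k l hk1 hk2 hl1 hl2
    rcases lt_trichotomy k l with h | rfl | h
    · rw [hPapp, hbr.bb k l hk1 h hl2, map_zero, sub_zero, hv5 k l hk1 h hl2, sB, if_pos h]
    · rw [hPalt, sB]; simp
    · rw [hPskew, hPapp, hbr.bb l k hl1 h hk2, map_zero, sub_zero, hv5 l k hl1 h hk2, sB,
        if_neg (by omega), if_pos h]
  have PGI : ∀ (v : Bool) (p q : ℕ), p < q → q ≤ N → P (gf J M v p q) I = 0 := by
    intro v p q hp hq
    obtain ⟨w1, w2⟩ := hv6.1 p q hp hq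
    cases v
    · rw [hPapp]; simp only [gf_false]; rw [hcen.jcen p q hp hq, map_zero, sub_zero, w1]
    · rw [hPapp]; simp only [gf_true]; rw [hcen.mcen p q hp hq, map_zero, sub_zero, w2]
  have PBI : ∀ k, 1 ≤ k → k ≤ N → P (B k) I = γ k := by
    intro k hk1 hk2
    rw [hPapp, hcen.bcen k hk1 hk2, map_zero, sub_zero, hv6.2 k hk1 hk2]
  have hBzB : ∀ l, 1 ≤ l → l ≤ N → ∀ (a b : ℕ), a < b → b ≤ N →
      ∀ s' ∈ Finset.Icc (a + 1) b, ckW ω a b * P (B s') (B l) = 0 := by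
    intro l hl1 hl2 a b h1 h2 s' hs'
    have hm := Finset.mem_Icc.mp hs'
    refine ckW_factor ω hs' _ ?_
    rw [PBB s' l (by omega) (by omega) hl1 hl2, sB]
    split_ifs with hc1 hc2
    · exact (hβ s' l (by omega) hc1 hl2).1
    · rw [mul_neg, (hβ l s' hl1 hc2 (by omega)).2, neg_zero]
    · rw [mul_zero]
  have hBzI : ∀ (a b : ℕ), a < b → b ≤ N →
      ∀ s' ∈ Finset.Icc (a + 1) b, ckW ω a b * P (B s') I = 0 := by
    intro a b h1 h2 s' hs'
    have hm := Finset.mem_Icc.mp hs'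
    refine ckW_factor ω hs' _ ?_
    rw [PBI s' (by omega) (by omega)]
    exact hγ s' (by omega) (by omega)
  have hA : ∀ a b c : ℕ, a < b → b < c →
      ckA ω α a c = ckW ω b c * ckA ω α a b + ckW ω a b * ckA ω α b c :=
    fun a b c h1 h2 => ckA_id ω α h1 h2
  -- the cocycle identity for generators
  have cggg := cGGG hbr P (ckA ω α) PG PBG hA
  have cggb : ∀ (s t : Bool) (a b d e l : ℕ), a < b → b ≤ N → d < e → e ≤ N →
      1 ≤ l → l ≤ N → cPf P (gf J M s a b) (gf J M t d e) (B l) = 0 := by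
    intro s t a b d e l h1 h2 h3 h4 h5 h6
    unfold cPf
    rw [termZeroZ hbr P (B l) (fun v p q hp hq => PGB v p q l hp hq h5 h6)
        (fun a' b' ha hb s' hs' => hBzB l h5 h6 a' b' ha hb s' hs') s t h1 h2 h3 h4]
    rw [gB hbr t h3 h4 h5 h6, map_smul, LinearMap.smul_apply, smul_eq_mul,
      PG (!t) s d e a b h3 h4 h1 h2]
    have e3 : ⁅B l, gf J M s a b⁆ = -((cs s * ckKappa a b l) • gf J M (!s) a b) := by
      rw [← lie_skew, gB hbr s h1 h2 h5 h6]
    rw [e3, map_neg, LinearMap.neg_apply, map_smul, LinearMap.smul_apply, smul_eq_mul,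
      PG (!s) t a b d e h1 h2 h3 h4]
    by_cases hpq : a = d ∧ b = e
    · obtain ⟨rfl, rfl⟩ := hpq
      cases s <;> cases t <;> simp [cs, sg] <;> ring
    · rw [if_neg (by omega), if_neg hpq]
      ring
  have cggi : ∀ (s t : Bool) (a b d e : ℕ), a < b → b ≤ N → d < e → e ≤ N →
      cPf P (gf J M s a b) (gf J M t d e) I = 0 := by
    intro s t a b d e h1 h2 h3 h4
    unfold cPf
    have e2 : ⁅gf J M t d e, I⁆ = 0 := by
      cases t
      · exact hcen.jcen d e h3 h4
      · exact hcen.mcen d e h3 h4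
    have e3 : ⁅I, gf J M s a b⁆ = 0 := by
      rw [← lie_skew]
      cases s
      · simp only [gf_false]; rw [hcen.jcen a b h1 h2, neg_zero]
      · simp only [gf_true]; rw [hcen.mcen a b h1 h2, neg_zero]
    rw [termZeroZ hbr P I PGI hBzI s t h1 h2 h3 h4, e2, e3]
    simp
  have cgbb : ∀ (s : Bool) (a b k l : ℕ), a < b → b ≤ N → 1 ≤ k → k ≤ N →
      1 ≤ l → l ≤ N → cPf P (gf J M s a b) (B k) (B l) = 0 := by
    intro s a b k l h1 h2 hk1 hk2 hl1 hl2
    unfold cPf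
    have e3 : ⁅B l, gf J M s a b⁆ = -((cs s * ckKappa a b l) • gf J M (!s) a b) := by
      rw [← lie_skew, gB hbr s h1 h2 hl1 hl2]
    rw [gB hbr s h1 h2 hk1 hk2, map_smul, LinearMap.smul_apply, smul_eq_mul,
      PGB (!s) a b l h1 h2 hl1 hl2, bbTot hbr hk1 hk2 hl1 hl2, map_zero,
      LinearMap.zero_apply, e3, map_neg, LinearMap.neg_apply, map_smul,
      LinearMap.smul_apply, smul_eq_mul, PGB (!s) a b k h1 h2 hk1 hk2]
    ring
  have cgbi : ∀ (s : Bool) (a b l : ℕ), a < b → b ≤ N → 1 ≤ l → l ≤ N →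
      cPf P (gf J M s a b) (B l) I = 0 := by
    intro s a b l h1 h2 hl1 hl2
    unfold cPf
    have e3 : ⁅I, gf J M s a b⁆ = 0 := by
      rw [← lie_skew]
      cases s
      · simp only [gf_false]; rw [hcen.jcen a b h1 h2, neg_zero]
      · simp only [gf_true]; rw [hcen.mcen a b h1 h2, neg_zero]
    rw [gB hbr s h1 h2 hl1 hl2, map_smul, LinearMap.smul_apply, smul_eq_mul,
      PGI (!s) a b h1 h2, hcen.bcen l hl1 hl2, map_zero, LinearMap.zero_apply, e3,
      map_zero, LinearMap.zero_apply]
    ring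
  have cbbb : ∀ k l m : ℕ, 1 ≤ k → k ≤ N → 1 ≤ l → l ≤ N → 1 ≤ m → m ≤ N →
      cPf P (B k) (B l) (B m) = 0 := by
    intro k l m hk1 hk2 hl1 hl2 hm1 hm2
    unfold cPf
    rw [bbTot hbr hk1 hk2 hl1 hl2, bbTot hbr hl1 hl2 hm1 hm2, bbTot hbr hm1 hm2 hk1 hk2]
    simp
  have cbbi : ∀ k l : ℕ, 1 ≤ k → k ≤ N → 1 ≤ l → l ≤ N → cPf P (B k) (B l) I = 0 := by
    intro k l hk1 hk2 hl1 hl2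
    unfold cPf
    have e3 : ⁅I, B k⁆ = 0 := by rw [← lie_skew, hcen.bcen k hk1 hk2, neg_zero]
    rw [bbTot hbr hk1 hk2 hl1 hl2, hcen.bcen l hl1 hl2, e3]
    simp
  have cgii : ∀ (s : Bool) (a b : ℕ), a < b → b ≤ N →
      cPf P (gf J M s a b) I I = 0 := by
    intro s a b h1 h2
    unfold cPf
    have e1 : ⁅gf J M s a b, I⁆ = 0 := by
      cases s
      · exact hcen.jcen a b h1 h2
      · exact hcen.mcen a b h1 h2
    have e3 : ⁅I, gf J M s a b⁆ = 0 := by rw [← lie_skew, e1, neg_zero]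
    rw [e1, e3, lie_self]
    simp
  have cbii : ∀ k : ℕ, 1 ≤ k → k ≤ N → cPf P (B k) I I = 0 := by
    intro k hk1 hk2
    unfold cPf
    have e3 : ⁅I, B k⁆ = 0 := by rw [← lie_skew, hcen.bcen k hk1 hk2, neg_zero]
    rw [hcen.bcen k hk1 hk2, lie_self, e3]
    simp
  have ciii : cPf P I I I = 0 := by
    unfold cPf
    rw [lie_self]
    simp
  -- the cocycle identity on arbitrary triples of generators
  have main : ∀ x y z : L, GenX N J M B I x → GenX N J M B I y → GenX N J M B I z →
      cPf P x y z = 0 := by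
    rintro x y z (⟨s, a, b, h1, h2, rfl⟩ | ⟨k, hk1, hk2, rfl⟩ | rfl)
      (⟨t, d, e, h3, h4, rfl⟩ | ⟨l, hl1, hl2, rfl⟩ | rfl)
      (⟨u, f, g, h5, h6, rfl⟩ | ⟨m, hm1, hm2, rfl⟩ | rfl)
    · exact cggg s t u h1 h2 h3 h4 h5 h6
    · exact cggb s t a b d e m h1 h2 h3 h4 hm1 hm2
    · exact cggi s t a b d e h1 h2 h3 h4
    · rw [ccyc, ccyc]; exact cggb u s f g a b l h5 h6 h1 h2 hl1 hl2
    · exact cgbb s a b l m h1 h2 hl1 hl2 hm1 hm2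
    · exact cgbi s a b l h1 h2 hl1 hl2
    · rw [ccyc, ccyc]; exact cggi u s f g a b h5 h6 h1 h2
    · rw [ccyc, ccyc, cswap12, cgbi s a b m h1 h2 hm1 hm2, neg_zero]
    · exact cgii s a b h1 h2
    · rw [ccyc]; exact cggb t u d e f g k h3 h4 h5 h6 hk1 hk2
    · rw [ccyc]; exact cgbb t d e m k h3 h4 hm1 hm2 hk1 hk2
    · rw [cswap12, cgbi t d e k h3 h4 hk1 hk2, neg_zero]
    · rw [ccyc, ccyc]; exact cgbb u f g k l h5 h6 hk1 hk2 hl1 hl2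
    · exact cbbb k l m hk1 hk2 hl1 hl2 hm1 hm2
    · exact cbbi k l hk1 hk2 hl1 hl2
    · rw [ccyc, ccyc]; exact cgbi u f g k h5 h6 hk1 hk2
    · rw [ccyc, ccyc]; exact cbbi m k hm1 hm2 hk1 hk2
    · exact cbii k hk1 hk2
    · rw [ccyc]; exact cggi t u d e f g h3 h4 h5 h6
    · rw [ccyc]; exact cgbi t d e m h3 h4 hm1 hm2
    · rw [ccyc]; exact cgii t d e h3 h4
    · rw [ccyc, cswap12, cgbi u f g l h5 h6 hl1 hl2, neg_zero]
    · rw [ccyc]; exact cbbi l m hl1 hl2 hm1 hm2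
    · rw [ccyc]; exact cbii l hl1 hl2
    · rw [ccyc, ccyc]; exact cgii u f g h5 h6
    · rw [ccyc, ccyc]; exact cbii m hm1 hm2
    · exact ciii
  have hGen : ∀ i : UIdx N, GenX N J M B I (uFam N J M B I i) := by
    rintro (⟨⟨a, b⟩ | ⟨⟨a, b⟩ | l⟩, hp⟩ | ⟨⟩)
    · exact Or.inl ⟨false, a, b, hp.1, hp.2, rfl⟩
    · exact Or.inl ⟨true, a, b, hp.1, hp.2, rfl⟩
    · exact Or.inr (Or.inl ⟨l, hp.1, hp.2, rfl⟩)
    · exact Or.inr (Or.inr rfl)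
  -- linearity of the cocycle expression
  have clad3 : ∀ x y u v : L, cPf P x y (u + v) = cPf P x y u + cPf P x y v := by
    intro x y u v
    simp only [cPf, lie_add, add_lie, map_add, LinearMap.add_apply]
    ring
  have clsm3 : ∀ (r : ℝ) (x y u : L), cPf P x y (r • u) = r * cPf P x y u := by
    intro r x y u
    simp only [cPf, lie_smul, smul_lie, map_smul, LinearMap.smul_apply, smul_eq_mul]
    ring
  have clz3 : ∀ x y : L, cPf P x y 0 = 0 := by
    intro x y
    simp only [cPf, lie_zero, zero_lie, map_zero, LinearMap.zero_apply, LinearMap.map_zero]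
    ring
  have clad2 : ∀ x u v z : L, cPf P x (u + v) z = cPf P x u z + cPf P x v z := by
    intro x u v z
    simp only [cPf, lie_add, add_lie, map_add, LinearMap.add_apply]
    ring
  have clsm2 : ∀ (r : ℝ) (x u z : L), cPf P x (r • u) z = r * cPf P x u z := by
    intro r x u z
    simp only [cPf, lie_smul, smul_lie, map_smul, LinearMap.smul_apply, smul_eq_mul]
    ring
  have clz2 : ∀ x z : L, cPf P x 0 z = 0 := by
    intro x z
    simp only [cPf, lie_zero, zero_lie, map_zero, LinearMap.zero_apply, LinearMap.map_zero]
    ring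
  have clad1 : ∀ u v y z : L, cPf P (u + v) y z = cPf P u y z + cPf P v y z := by
    intro u v y z
    simp only [cPf, lie_add, add_lie, map_add, LinearMap.add_apply]
    ring
  have clsm1 : ∀ (r : ℝ) (u y z : L), cPf P (r • u) y z = r * cPf P u y z := by
    intro r u y z
    simp only [cPf, lie_smul, smul_lie, map_smul, LinearMap.smul_apply, smul_eq_mul]
    ring
  have clz1 : ∀ y z : L, cPf P 0 y z = 0 := by
    intro y z
    simp only [cPf, lie_zero, zero_lie, map_zero, LinearMap.zero_apply, LinearMap.map_zero]
    ring
  have hspan : ∀ w : L, w ∈ Submodule.span ℝ (Set.range (uFam N J M B I)) :=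
    fun w => hsp trivial
  have key : ∀ x y z : L, cPf P x y z = 0 := by
    intro x y z
    refine Submodule.span_induction (p := fun v _ => cPf P v y z = 0) ?_ (clz1 y z)
      (fun u v _ _ hu hv => by
        have hu' : cPf P u y z = 0 := hu
        have hv' : cPf P v y z = 0 := hv
        show cPf P (u + v) y z = 0
        rw [clad1, hu', hv', add_zero])
      (fun r v _ hv => by
        have hv' : cPf P v y z = 0 := hv
        show cPf P (r • v) y z = 0
        rw [clsm1, hv', mul_zero]) (hspan x)
    rintro v ⟨i, rfl⟩
    refine Submodule.span_induction (p := fun w _ => cPf P (uFam N J M B I i) w z = 0) ?_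
      (clz2 _ z)
      (fun u v _ _ hu hv => by
        have hu' : cPf P (uFam N J M B I i) u z = 0 := hu
        have hv' : cPf P (uFam N J M B I i) v z = 0 := hv
        show cPf P (uFam N J M B I i) (u + v) z = 0
        rw [clad2, hu', hv', add_zero])
      (fun r v _ hv => by
        have hv' : cPf P (uFam N J M B I i) v z = 0 := hv
        show cPf P (uFam N J M B I i) (r • v) z = 0
        rw [clsm2, hv', mul_zero]) (hspan y)
    rintro w ⟨j, rfl⟩
    refine Submodule.span_induction
      (p := fun w' _ => cPf P (uFam N J M B I i) (uFam N J M B I j) w' = 0) ?_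
      (clz3 _ _)
      (fun u v _ _ hu hv => by
        have hu' : cPf P (uFam N J M B I i) (uFam N J M B I j) u = 0 := hu
        have hv' : cPf P (uFam N J M B I i) (uFam N J M B I j) v = 0 := hv
        show cPf P (uFam N J M B I i) (uFam N J M B I j) (u + v) = 0
        rw [clad3, hu', hv', add_zero])
      (fun r v _ hv => by
        have hv' : cPf P (uFam N J M B I i) (uFam N J M B I j) v = 0 := hv
        show cPf P (uFam N J M B I i) (uFam N J M B I j) (r • v) = 0
        rw [clsm3, hv', mul_zero]) (hspan z)
    rintro w' ⟨k, rfl⟩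
    exact main _ _ _ (hGen i) (hGen j) (hGen k)
  -- conclusion
  intro x y z
  have jac : (⁅⁅x, y⁆, z⁆ + ⁅⁅y, z⁆, x⁆ + ⁅⁅z, x⁆, y⁆ : L) = 0 := by
    have h := lie_jacobi x y z
    have e1 : (⁅⁅x, y⁆, z⁆ : L) = -⁅z, ⁅x, y⁆⁆ := by rw [← lie_skew]
    have e2 : (⁅⁅y, z⁆, x⁆ : L) = -⁅x, ⁅y, z⁆⁆ := by rw [← lie_skew]
    have e3 : (⁅⁅z, x⁆, y⁆ : L) = -⁅y, ⁅z, x⁆⁆ := by rw [← lie_skew]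
    have h2 : (⁅z, ⁅x, y⁆⁆ + ⁅x, ⁅y, z⁆⁆ + ⁅y, ⁅z, x⁆⁆ : L) = 0 := by rw [← h]; abel
    rw [e1, e2, e3, ← neg_add, ← neg_add, neg_eq_zero]
    exact h2
  have expand : ξ ⁅x, y⁆ z + ξ ⁅y, z⁆ x + ξ ⁅z, x⁆ y
      = cPf P x y z + μ (⁅⁅x, y⁆, z⁆ + ⁅⁅y, z⁆, x⁆ + ⁅⁅z, x⁆, y⁆) := by
    simp only [cPf, hPapp, map_add]
    ring
  rw [expand, jac, map_zero, add_zero, key]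
end
end

section
/- Every 2-cocycle ξ on su_ω(N+1) is cohomologous to a reduced cocycle: there exist a linear functional μ : su_ω(N+1) → ℝ and real numbers α_k (1 ≤ k ≤ N) and β_{kl} (1 ≤ k < l ≤ N) with ω_k·β_{kl} = 0 and ω_l·β_{kl} = 0, such that ξ(x,y) = μ([x,y]) + χ_{α,β}(x,y) for all x,y, where χ_{α,β} is the alternating bilinear form that vanishes on every pair of distinct basis elements except χ_{α,β}(J_{ab},M_{ab}) = Σ_{s=a+1}^{b} ω_{a,s−1}ω_{s,b}·α_s for 0 ≤ a < b ≤ N and χ_{α,β}(B_k,B_l) = β_{kl} for 1 ≤ k < l ≤ N. -/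
open Finset

noncomputable section

namespace SUWork

lemma kadd (a b c l : ℕ) : ckKappa a b l + ckKappa b c l = ckKappa a c l := by
  unfold ckKappa; ring

lemma kval (a b : ℕ) (h : a < b) :
    ckKappa a b (a+1) = if b = a + 1 then 2 else 1 := by
  unfold ckKappa
  rw [Nat.add_sub_cancel, if_pos rfl, if_neg (by omega : b ≠ a), if_neg (by omega : a ≠ a + 1)]
  by_cases hb : b = a + 1 <;> simp [hb] <;> norm_num

lemma knz {a b : ℕ} (h : a < b) : ckKappa a b (a+1) ≠ 0 := by
  rw [kval a b h]; split_ifs <;> norm_num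

lemma ckW_self (ω : ℕ → ℝ) (a : ℕ) : ckW ω a a = 1 := by
  rw [ckW, Finset.Icc_eq_empty (by omega), Finset.prod_empty]

lemma ckW_single (ω : ℕ → ℝ) (k : ℕ) (hk : 1 ≤ k) : ckW ω (k-1) k = ω k := by
  rw [ckW, show k - 1 + 1 = k from by omega, Finset.Icc_self, Finset.prod_singleton]

lemma ckW_mul (ω : ℕ → ℝ) (x y z : ℕ) (h1 : x ≤ y) (h2 : y ≤ z) :
    ckW ω x y * ckW ω y z = ckW ω x z := by
  unfold ckW
  rw [Finset.Icc_add_one_left_eq_Ioc, Finset.Icc_add_one_left_eq_Ioc, Finset.Icc_add_one_left_eq_Ioc]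
  exact Finset.prod_Ioc_consecutive _ h1 h2

lemma gsum (x L : ℕ) (hL : 1 ≤ L) :
    ∑ l ∈ Icc 1 L, ((if x = l - 1 then (1:ℝ) else 0) - if x = l then 1 else 0)
      = (if x = 0 then 1 else 0) - if x = L then 1 else 0 := by
  induction L, hL using Nat.le_induction with
  | base => rw [Finset.Icc_self, Finset.sum_singleton]
  | succ n hn ih =>
    rw [Finset.sum_Icc_succ_top (by omega : 1 ≤ n + 1), ih, Nat.add_sub_cancel]
    ring

lemma ksum (a b L : ℕ) (hb : 1 ≤ b) (hL : 1 ≤ L) :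
    ∑ l ∈ Icc 1 L, ckKappa a b l
      = (if a = 0 then (1:ℝ) else 0) - (if a = L then 1 else 0) + (if b = L then 1 else 0) := by
  have h1 := gsum a L hL
  have h2 := gsum b L hL
  have key : ∑ l ∈ Icc 1 L, ckKappa a b l
      = (∑ l ∈ Icc 1 L, ((if a = l - 1 then (1:ℝ) else 0) - if a = l then 1 else 0))
        - ∑ l ∈ Icc 1 L, ((if b = l - 1 then (1:ℝ) else 0) - if b = l then 1 else 0) := by
    rw [← Finset.sum_sub_distrib]
    apply Finset.sum_congr rfl
    intro l _
    unfold ckKappa; ring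
  rw [key, h1, h2, if_neg (by omega : b ≠ 0)]
  ring

lemma solve2 {A1 B1 A2 B2 x y : ℝ} (h1 : A1*x + B1*y = 0) (h2 : A2*x + B2*y = 0)
    (hd : A1*B2 - A2*B1 ≠ 0) : x = 0 ∧ y = 0 := by
  constructor
  · have hx : x * (A1*B2 - A2*B1) = 0 := by linear_combination B2 * h1 - B1 * h2
    rcases mul_eq_zero.mp hx with h | h
    · exact h
    · exact absurd h hd
  · have hy : y * (A1*B2 - A2*B1) = 0 := by linear_combination A1 * h2 - A2 * h1
    rcases mul_eq_zero.mp hy with h | h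
    · exact h
    · exact absurd h hd

lemma kspanAux (N a b d e : ℕ) (hab : a < b) (hbN : b ≤ N) (hde : d < e) (heN : e ≤ N)
    (hne : (a,b) ≠ (d,e)) (hda : d = 0 → a = 0)
    (h : ∀ l ∈ Icc 1 N, ckKappa a b (a+1) * ckKappa d e l = ckKappa a b l * ckKappa d e (a+1)) :
    False := by
  set A := ckKappa a b (a+1) with hA_def
  set C := ckKappa d e (a+1) with hC_def
  have hA : A ≠ 0 := knz hab
  have key : ∀ L, 1 ≤ L → L ≤ N →
      A * ((if d = 0 then (1:ℝ) else 0) - (if d = L then 1 else 0) + (if e = L then 1 else 0))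
        = ((if a = 0 then (1:ℝ) else 0) - (if a = L then 1 else 0) + (if b = L then 1 else 0)) * C := by
    intro L h1 h2
    have e1 : ∑ l ∈ Icc 1 L, (A * ckKappa d e l) = ∑ l ∈ Icc 1 L, (ckKappa a b l * C) := by
      apply Finset.sum_congr rfl
      intro l hl
      simp only [Finset.mem_Icc] at hl
      exact h l (Finset.mem_Icc.mpr ⟨hl.1, le_trans hl.2 h2⟩)
    rw [← Finset.mul_sum, ← Finset.sum_mul, ksum a b L (by omega) h1, ksum d e L (by omega) h1] at e1
    exact e1
  by_cases ha0 : a = 0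
  · by_cases hd0 : d = 0
    · have hbe : b ≠ e := by
        intro hh; exact hne (by rw [ha0, hd0, hh])
      have e1 := key b (by omega) hbN
      have e2 := key e (by omega) heN
      rw [if_pos hd0, if_neg (by omega : d ≠ b), if_neg (fun hh => hbe hh.symm),
        if_pos ha0, if_neg (by omega : a ≠ b), if_pos rfl] at e1
      rw [if_pos hd0, if_neg (by omega : d ≠ e), if_pos rfl,
        if_pos ha0, if_neg (by omega : a ≠ e), if_neg hbe] at e2
      apply hA; linarith
    · have e1 := key d (by omega) (by omega)
      have e2 := key e (by omega) heN
      rw [if_neg hd0, if_pos rfl, if_neg (by omega : e ≠ d), if_pos ha0,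
        if_neg (by omega : a ≠ d)] at e1
      rw [if_neg hd0, if_neg (by omega : d ≠ e), if_pos rfl, if_pos ha0,
        if_neg (by omega : a ≠ e)] at e2
      set t1 : ℝ := if b = d then (1:ℝ) else 0 with ht1
      set t2 : ℝ := if b = e then (1:ℝ) else 0 with ht2
      have ht1' : 0 ≤ t1 := by rw [ht1]; split_ifs <;> norm_num
      have ht2' : 0 ≤ t2 := by rw [ht2]; split_ifs <;> norm_num
      have h5 : (2 + t1 + t2) * C = 0 := by linarith
      rcases mul_eq_zero.mp h5 with h6 | h6
      · linarith
      · rw [h6, mul_zero] at e2; apply hA; linarith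
  · have hd1 : 1 ≤ d := by
      rcases Nat.eq_zero_or_pos d with h0 | h0
      · exact absurd (hda h0) ha0
      · exact h0
    by_cases hb : b ≠ d ∧ b ≠ e
    · have e1 := key b (by omega) hbN
      have e2 := key e (by omega) heN
      rw [if_neg (by omega : d ≠ 0), if_neg (fun hh => hb.1 hh.symm),
        if_neg (fun hh => hb.2 hh.symm), if_neg ha0, if_neg (by omega : a ≠ b), if_pos rfl] at e1
      rw [if_neg (by omega : d ≠ 0), if_neg (by omega : d ≠ e), if_pos rfl, if_neg ha0] at e2
      have hC0 : C = 0 := by linarith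
      rw [hC0, mul_zero] at e2
      apply hA; linarith
    · have hune : ¬(a = d ∧ b = e) := by
        rintro ⟨h1, h2⟩; exact hne (by rw [h1, h2])
      have hcase : b = d ∨ b = e := by tauto
      have hadni : a ≠ d ∧ a ≠ e := by
        constructor
        · intro hh
          rcases hcase with h9 | h9
          · omega
          · exact hune ⟨hh, h9⟩
        · intro hh; omega
      have e1 := key a (by omega) (by omega)
      have e2 := key e (by omega) heN
      rw [if_neg (by omega : d ≠ 0), if_neg (fun hh => hadni.1 hh.symm),
        if_neg (fun hh => hadni.2 hh.symm), if_neg ha0, if_pos rfl,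
        if_neg (by omega : b ≠ a)] at e1
      rw [if_neg (by omega : d ≠ 0), if_neg (by omega : d ≠ e), if_pos rfl, if_neg ha0] at e2
      have hC0 : C = 0 := by linarith
      rw [hC0, mul_zero] at e2
      apply hA; linarith

lemma kspan (N a b d e : ℕ) (hab : a < b) (hbN : b ≤ N) (hde : d < e) (heN : e ≤ N)
    (hne : (a,b) ≠ (d,e)) :
    ∃ l₁, (1 ≤ l₁ ∧ l₁ ≤ N) ∧ ∃ l₂, (1 ≤ l₂ ∧ l₂ ≤ N) ∧
      ckKappa a b l₁ * ckKappa d e l₂ - ckKappa a b l₂ * ckKappa d e l₁ ≠ 0 := by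
  by_contra hc
  push_neg at hc
  have hc' : ∀ l₁, 1 ≤ l₁ → l₁ ≤ N → ∀ l₂, 1 ≤ l₂ → l₂ ≤ N →
      ckKappa a b l₁ * ckKappa d e l₂ = ckKappa a b l₂ * ckKappa d e l₁ := by
    intro l₁ u1 u2 l₂ u3 u4
    have := hc l₁ ⟨u1, u2⟩ l₂ ⟨u3, u4⟩
    linarith
  by_cases hd0 : d = 0 → a = 0
  · apply kspanAux N a b d e hab hbN hde heN hne hd0
    intro l hl
    simp only [Finset.mem_Icc] at hl
    exact hc' (a+1) (by omega) (by omega) l hl.1 hl.2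
  · push_neg at hd0
    apply kspanAux N d e a b hde heN hab hbN (fun hh => hne hh.symm) (fun hh => absurd hh hd0.2)
    intro l hl
    simp only [Finset.mem_Icc] at hl
    have := hc' l hl.1 hl.2 (d+1) (by omega) (by omega)
    linarith


variable {L : Type*} [LieRing L] [LieAlgebra ℝ L]

/-- value of `μ` on `J a b` -/
def jvalD (M : ℕ → ℕ → L) (B : ℕ → L) (ξ : L →ₗ[ℝ] L →ₗ[ℝ] ℝ) (a b : ℕ) : ℝ :=
  -(ξ (M a b) (B (a+1))) / ckKappa a b (a+1)

/-- value of `μ` on `M a b` -/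
def mvalD (J : ℕ → ℕ → L) (B : ℕ → L) (ξ : L →ₗ[ℝ] L →ₗ[ℝ] ℝ) (a b : ℕ) : ℝ :=
  ξ (J a b) (B (a+1)) / ckKappa a b (a+1)

lemma skewξ (ξ : L →ₗ[ℝ] L →ₗ[ℝ] ℝ) (hξ : IsLieCocycle ξ) (x y : L) : ξ x y = - ξ y x := by
  have h := hξ.1 (x + y)
  simp only [map_add, LinearMap.add_apply, hξ.1 x, hξ.1 y] at h
  linarith

lemma bb0 (N : ℕ) (ω : ℕ → ℝ) (J M : ℕ → ℕ → L) (B : ℕ → L)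
    (hbr : SUBrackets N ω J M B) (k l : ℕ) (h1 : 1 ≤ k) (h2 : k ≤ N) (h3 : 1 ≤ l)
    (h4 : l ≤ N) : ⁅B k, B l⁆ = 0 := by
  rcases lt_trichotomy k l with h | h | h
  · exact hbr.bb k l h1 h h4
  · rw [h]; exact lie_self _
  · rw [← lie_skew, hbr.bb l k h3 h h2, neg_zero]

lemma xiJB (N : ℕ) (ω : ℕ → ℝ) (J M : ℕ → ℕ → L) (B : ℕ → L)
    (ξ : L →ₗ[ℝ] L →ₗ[ℝ] ℝ) (hbr : SUBrackets N ω J M B) (hξ : IsLieCocycle ξ)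
    (a b l : ℕ) (hab : a < b) (hbN : b ≤ N) (hl1 : 1 ≤ l) (hlN : l ≤ N) :
    ξ (J a b) (B l) = ckKappa a b l * mvalD J B ξ a b := by
  have ha1 : 1 ≤ a + 1 := by omega
  have haN : a + 1 ≤ N := by omega
  have hc := hξ.2 (M a b) (B (a+1)) (B l)
  rw [hbr.mb a b (a+1) hab hbN ha1 haN,
      bb0 N ω J M B hbr (a+1) l ha1 haN hl1 hlN,
      show ⁅B l, M a b⁆ = ckKappa a b l • J a b by
        rw [← lie_skew, hbr.mb a b l hab hbN hl1 hlN, neg_neg]] at hc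
  simp only [map_smul, LinearMap.smul_apply, smul_eq_mul, map_zero, LinearMap.zero_apply,
    map_neg, LinearMap.neg_apply] at hc
  rw [mvalD]
  field_simp [knz hab]
  linear_combination -hc

lemma xiMB (N : ℕ) (ω : ℕ → ℝ) (J M : ℕ → ℕ → L) (B : ℕ → L)
    (ξ : L →ₗ[ℝ] L →ₗ[ℝ] ℝ) (hbr : SUBrackets N ω J M B) (hξ : IsLieCocycle ξ)
    (a b l : ℕ) (hab : a < b) (hbN : b ≤ N) (hl1 : 1 ≤ l) (hlN : l ≤ N) :
    ξ (M a b) (B l) = -(ckKappa a b l * jvalD M B ξ a b) := by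
  have ha1 : 1 ≤ a + 1 := by omega
  have haN : a + 1 ≤ N := by omega
  have hc := hξ.2 (J a b) (B (a+1)) (B l)
  rw [hbr.jb a b (a+1) hab hbN ha1 haN,
      bb0 N ω J M B hbr (a+1) l ha1 haN hl1 hlN,
      show ⁅B l, J a b⁆ = -(ckKappa a b l • M a b) by
        rw [← lie_skew, hbr.jb a b l hab hbN hl1 hlN]] at hc
  simp only [map_smul, LinearMap.smul_apply, smul_eq_mul, map_zero, LinearMap.zero_apply,
    map_neg, LinearMap.neg_apply] at hc
  rw [jvalD]
  field_simp [knz hab]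
  linear_combination hc

lemma cocJJ (N : ℕ) (ω : ℕ → ℝ) (J M : ℕ → ℕ → L) (B : ℕ → L)
    (ξ : L →ₗ[ℝ] L →ₗ[ℝ] ℝ) (hbr : SUBrackets N ω J M B) (hξ : IsLieCocycle ξ)
    (a b d e l : ℕ) (hab : a < b) (hbN : b ≤ N) (hde : d < e) (heN : e ≤ N)
    (hl1 : 1 ≤ l) (hlN : l ≤ N) :
    ξ ⁅J a b, J d e⁆ (B l)
      = ckKappa d e l * ξ (J a b) (M d e) + ckKappa a b l * ξ (M a b) (J d e) := by
  have hc := hξ.2 (J a b) (J d e) (B l)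
  rw [hbr.jb d e l hde heN hl1 hlN,
      show ⁅B l, J a b⁆ = -(ckKappa a b l • M a b) by
        rw [← lie_skew, hbr.jb a b l hab hbN hl1 hlN]] at hc
  simp only [map_smul, LinearMap.smul_apply, smul_eq_mul, map_neg, LinearMap.neg_apply] at hc
  rw [skewξ ξ hξ (M d e) (J a b)] at hc
  linear_combination hc

lemma cocJM (N : ℕ) (ω : ℕ → ℝ) (J M : ℕ → ℕ → L) (B : ℕ → L)
    (ξ : L →ₗ[ℝ] L →ₗ[ℝ] ℝ) (hbr : SUBrackets N ω J M B) (hξ : IsLieCocycle ξ)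
    (a b d e l : ℕ) (hab : a < b) (hbN : b ≤ N) (hde : d < e) (heN : e ≤ N)
    (hl1 : 1 ≤ l) (hlN : l ≤ N) :
    ξ ⁅J a b, M d e⁆ (B l)
      = ckKappa a b l * ξ (M a b) (M d e) - ckKappa d e l * ξ (J a b) (J d e) := by
  have hc := hξ.2 (J a b) (M d e) (B l)
  rw [hbr.mb d e l hde heN hl1 hlN,
      show ⁅B l, J a b⁆ = -(ckKappa a b l • M a b) by
        rw [← lie_skew, hbr.jb a b l hab hbN hl1 hlN]] at hc
  simp only [map_smul, LinearMap.smul_apply, smul_eq_mul, map_neg, LinearMap.neg_apply] at hc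
  rw [skewξ ξ hξ (J d e) (J a b)] at hc
  linear_combination hc

lemma lemW (N : ℕ) (ω : ℕ → ℝ) (J M : ℕ → ℕ → L) (B : ℕ → L)
    (ξ : L →ₗ[ℝ] L →ₗ[ℝ] ℝ) (hbr : SUBrackets N ω J M B) (hξ : IsLieCocycle ξ)
    (a b d e : ℕ) (hab : a < b) (hbN : b ≤ N) (hde : d < e) (heN : e ≤ N)
    (hne : (a,b) ≠ (d,e)) (u₀ v₀ p₀ q₀ : ℝ)
    (h1 : ∀ l, 1 ≤ l → l ≤ N →
      ξ ⁅J a b, J d e⁆ (B l) = ckKappa d e l * p₀ + ckKappa a b l * q₀)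
    (h2 : ∀ l, 1 ≤ l → l ≤ N →
      ξ ⁅J a b, M d e⁆ (B l) = ckKappa a b l * v₀ - ckKappa d e l * u₀) :
    ξ (J a b) (J d e) = u₀ ∧ ξ (M a b) (M d e) = v₀ ∧
      ξ (J a b) (M d e) = p₀ ∧ ξ (M a b) (J d e) = q₀ := by
  obtain ⟨l₁, ⟨ha1, ha2⟩, l₂, ⟨hb1, hb2⟩, hdet⟩ := kspan N a b d e hab hbN hde heN hne
  have E1 : ∀ l, 1 ≤ l → l ≤ N →
      ckKappa d e l * (ξ (J a b) (M d e) - p₀) + ckKappa a b l * (ξ (M a b) (J d e) - q₀) = 0 := by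
    intro l u1 u2
    linear_combination h1 l u1 u2 - cocJJ N ω J M B ξ hbr hξ a b d e l hab hbN hde heN u1 u2
  have E2 : ∀ l, 1 ≤ l → l ≤ N →
      ckKappa a b l * (ξ (M a b) (M d e) - v₀) + (-(ckKappa d e l)) * (ξ (J a b) (J d e) - u₀) = 0 := by
    intro l u1 u2
    linear_combination h2 l u1 u2 - cocJM N ω J M B ξ hbr hξ a b d e l hab hbN hde heN u1 u2
  have S1 := solve2 (E1 l₁ ha1 ha2) (E1 l₂ hb1 hb2)
    (by intro hz; apply hdet; linarith)
  have S2 := solve2 (E2 l₁ ha1 ha2) (E2 l₂ hb1 hb2)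
    (by intro hz; apply hdet; linarith)
  exact ⟨sub_eq_zero.mp S2.2, sub_eq_zero.mp S2.1, sub_eq_zero.mp S1.1, sub_eq_zero.mp S1.2⟩






lemma cfgLeft (N : ℕ) (ω : ℕ → ℝ) (J M : ℕ → ℕ → L) (B : ℕ → L)
    (ξ : L →ₗ[ℝ] L →ₗ[ℝ] ℝ) (hbr : SUBrackets N ω J M B) (hξ : IsLieCocycle ξ)
    (μ' : L →ₗ[ℝ] ℝ)
    (hJv : ∀ x y, x < y → y ≤ N → μ' (J x y) = jvalD M B ξ x y)
    (hMv : ∀ x y, x < y → y ≤ N → μ' (M x y) = mvalD J B ξ x y)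
    (a b c : ℕ) (h1 : a < b) (h2 : b < c) (h3 : c ≤ N) :
    ξ (J a b) (J a c) = μ' ⁅J a b, J a c⁆ ∧ ξ (M a b) (M a c) = μ' ⁅M a b, M a c⁆ ∧
      ξ (J a b) (M a c) = μ' ⁅J a b, M a c⁆ ∧ ξ (M a b) (J a c) = μ' ⁅M a b, J a c⁆ := by
  have hbN : b ≤ N := by omega
  have hac : a < c := by omega
  obtain ⟨w1, w2, w3, w4⟩ := lemW N ω J M B ξ hbr hξ a b a c h1 hbN hac h3
    (by intro hh; rw [Prod.mk.injEq] at hh; omega)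
    (ckW ω a b * jvalD M B ξ b c) (ckW ω a b * jvalD M B ξ b c)
    (ckW ω a b * mvalD J B ξ b c) (-(ckW ω a b * mvalD J B ξ b c))
    (by
      intro l u1 u2
      rw [hbr.jj_left a b c h1 h2 h3, map_smul, LinearMap.smul_apply, smul_eq_mul,
        xiJB N ω J M B ξ hbr hξ b c l h2 h3 u1 u2]
      linear_combination (ckW ω a b * mvalD J B ξ b c) * kadd a b c l)
    (by
      intro l u1 u2
      rw [hbr.jm_left a b c h1 h2 h3, map_smul, LinearMap.smul_apply, smul_eq_mul,
        xiMB N ω J M B ξ hbr hξ b c l h2 h3 u1 u2]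
      linear_combination (-(ckW ω a b * jvalD M B ξ b c)) * kadd a b c l)
  refine ⟨?_, ?_, ?_, ?_⟩
  · rw [hbr.jj_left a b c h1 h2 h3, map_smul, smul_eq_mul, hJv b c h2 h3]; exact w1
  · rw [hbr.mm_left a b c h1 h2 h3, map_smul, smul_eq_mul, hJv b c h2 h3]; exact w2
  · rw [hbr.jm_left a b c h1 h2 h3, map_smul, smul_eq_mul, hMv b c h2 h3]; exact w3
  · rw [hbr.mj_left a b c h1 h2 h3, map_neg, map_smul, smul_eq_mul, hMv b c h2 h3]; exact w4

lemma cfgMid (N : ℕ) (ω : ℕ → ℝ) (J M : ℕ → ℕ → L) (B : ℕ → L)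
    (ξ : L →ₗ[ℝ] L →ₗ[ℝ] ℝ) (hbr : SUBrackets N ω J M B) (hξ : IsLieCocycle ξ)
    (μ' : L →ₗ[ℝ] ℝ)
    (hJv : ∀ x y, x < y → y ≤ N → μ' (J x y) = jvalD M B ξ x y)
    (hMv : ∀ x y, x < y → y ≤ N → μ' (M x y) = mvalD J B ξ x y)
    (a b c : ℕ) (h1 : a < b) (h2 : b < c) (h3 : c ≤ N) :
    ξ (J a b) (J b c) = μ' ⁅J a b, J b c⁆ ∧ ξ (M a b) (M b c) = μ' ⁅M a b, M b c⁆ ∧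
      ξ (J a b) (M b c) = μ' ⁅J a b, M b c⁆ ∧ ξ (M a b) (J b c) = μ' ⁅M a b, J b c⁆ := by
  have hbN : b ≤ N := by omega
  have hac : a < c := by omega
  obtain ⟨w1, w2, w3, w4⟩ := lemW N ω J M B ξ hbr hξ a b b c h1 hbN h2 h3
    (by intro hh; rw [Prod.mk.injEq] at hh; omega)
    (-(jvalD M B ξ a c)) (jvalD M B ξ a c) (-(mvalD J B ξ a c)) (-(mvalD J B ξ a c))
    (by
      intro l u1 u2
      rw [hbr.jj_mid a b c h1 h2 h3, map_neg, LinearMap.neg_apply,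
        xiJB N ω J M B ξ hbr hξ a c l hac h3 u1 u2]
      linear_combination (mvalD J B ξ a c) * kadd a b c l)
    (by
      intro l u1 u2
      rw [hbr.jm_mid a b c h1 h2 h3, map_neg, LinearMap.neg_apply,
        xiMB N ω J M B ξ hbr hξ a c l hac h3 u1 u2]
      linear_combination (-(jvalD M B ξ a c)) * kadd a b c l)
  refine ⟨?_, ?_, ?_, ?_⟩
  · rw [hbr.jj_mid a b c h1 h2 h3, map_neg, hJv a c hac h3]; exact w1
  · rw [hbr.mm_mid a b c h1 h2 h3, hJv a c hac h3]; exact w2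
  · rw [hbr.jm_mid a b c h1 h2 h3, map_neg, hMv a c hac h3]; exact w3
  · rw [hbr.mj_mid a b c h1 h2 h3, map_neg, hMv a c hac h3]; exact w4

lemma cfgRight (N : ℕ) (ω : ℕ → ℝ) (J M : ℕ → ℕ → L) (B : ℕ → L)
    (ξ : L →ₗ[ℝ] L →ₗ[ℝ] ℝ) (hbr : SUBrackets N ω J M B) (hξ : IsLieCocycle ξ)
    (μ' : L →ₗ[ℝ] ℝ)
    (hJv : ∀ x y, x < y → y ≤ N → μ' (J x y) = jvalD M B ξ x y)
    (hMv : ∀ x y, x < y → y ≤ N → μ' (M x y) = mvalD J B ξ x y)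
    (a b c : ℕ) (h1 : a < b) (h2 : b < c) (h3 : c ≤ N) :
    ξ (J a c) (J b c) = μ' ⁅J a c, J b c⁆ ∧ ξ (M a c) (M b c) = μ' ⁅M a c, M b c⁆ ∧
      ξ (J a c) (M b c) = μ' ⁅J a c, M b c⁆ ∧ ξ (M a c) (J b c) = μ' ⁅M a c, J b c⁆ := by
  have hbN : b ≤ N := by omega
  have hac : a < c := by omega
  have hab : a < b := h1
  obtain ⟨w1, w2, w3, w4⟩ := lemW N ω J M B ξ hbr hξ a c b c hac h3 h2 h3
    (by intro hh; rw [Prod.mk.injEq] at hh; omega)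
    (ckW ω b c * jvalD M B ξ a b) (ckW ω b c * jvalD M B ξ a b)
    (-(ckW ω b c * mvalD J B ξ a b)) (ckW ω b c * mvalD J B ξ a b)
    (by
      intro l u1 u2
      rw [hbr.jj_right a b c h1 h2 h3, map_smul, LinearMap.smul_apply, smul_eq_mul,
        xiJB N ω J M B ξ hbr hξ a b l h1 hbN u1 u2]
      linear_combination (ckW ω b c * mvalD J B ξ a b) * kadd a b c l)
    (by
      intro l u1 u2
      rw [hbr.jm_right a b c h1 h2 h3, map_neg, LinearMap.neg_apply, map_smul,
        LinearMap.smul_apply, smul_eq_mul,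
        xiMB N ω J M B ξ hbr hξ a b l h1 hbN u1 u2]
      linear_combination (ckW ω b c * jvalD M B ξ a b) * kadd a b c l)
  refine ⟨?_, ?_, ?_, ?_⟩
  · rw [hbr.jj_right a b c h1 h2 h3, map_smul, smul_eq_mul, hJv a b h1 hbN]; exact w1
  · rw [hbr.mm_right a b c h1 h2 h3, map_smul, smul_eq_mul, hJv a b h1 hbN]; exact w2
  · rw [hbr.jm_right a b c h1 h2 h3, map_neg, map_smul, smul_eq_mul, hMv a b h1 hbN]; exact w3
  · rw [hbr.mj_right a b c h1 h2 h3, map_smul, smul_eq_mul, hMv a b h1 hbN]; exact w4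

lemma cfgDisj (N : ℕ) (ω : ℕ → ℝ) (J M : ℕ → ℕ → L) (B : ℕ → L)
    (ξ : L →ₗ[ℝ] L →ₗ[ℝ] ℝ) (hbr : SUBrackets N ω J M B) (hξ : IsLieCocycle ξ)
    (μ' : L →ₗ[ℝ] ℝ)
    (a b d e : ℕ) (hab : a < b) (hbN : b ≤ N) (hde : d < e) (heN : e ≤ N)
    (had : a ≠ d) (hae : a ≠ e) (hbd : b ≠ d) (hbe : b ≠ e) :
    ξ (J a b) (J d e) = μ' ⁅J a b, J d e⁆ ∧ ξ (M a b) (M d e) = μ' ⁅M a b, M d e⁆ ∧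
      ξ (J a b) (M d e) = μ' ⁅J a b, M d e⁆ ∧ ξ (M a b) (J d e) = μ' ⁅M a b, J d e⁆ := by
  have hmj : ⁅M a b, J d e⁆ = 0 := by
    rw [← lie_skew, hbr.jm_disj d e a b hde heN hab hbN had.symm hbd.symm hae.symm hbe.symm,
      neg_zero]
  obtain ⟨w1, w2, w3, w4⟩ := lemW N ω J M B ξ hbr hξ a b d e hab hbN hde heN
    (by intro hh; rw [Prod.mk.injEq] at hh; omega)
    0 0 0 0
    (by
      intro l u1 u2
      rw [hbr.jj_disj a b d e hab hbN hde heN had hae hbd hbe, map_zero,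
        LinearMap.zero_apply]
      ring)
    (by
      intro l u1 u2
      rw [hbr.jm_disj a b d e hab hbN hde heN had hae hbd hbe, map_zero,
        LinearMap.zero_apply]
      ring)
  refine ⟨?_, ?_, ?_, ?_⟩
  · rw [hbr.jj_disj a b d e hab hbN hde heN had hae hbd hbe, map_zero]; exact w1
  · rw [hbr.mm_disj a b d e hab hbN hde heN had hae hbd hbe, map_zero]; exact w2
  · rw [hbr.jm_disj a b d e hab hbN hde heN had hae hbd hbe, map_zero]; exact w3
  · rw [hmj, map_zero]; exact w4

lemma main4 (N : ℕ) (ω : ℕ → ℝ) (J M : ℕ → ℕ → L) (B : ℕ → L)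
    (ξ : L →ₗ[ℝ] L →ₗ[ℝ] ℝ) (hbr : SUBrackets N ω J M B) (hξ : IsLieCocycle ξ)
    (μ' : L →ₗ[ℝ] ℝ)
    (hJv : ∀ x y, x < y → y ≤ N → μ' (J x y) = jvalD M B ξ x y)
    (hMv : ∀ x y, x < y → y ≤ N → μ' (M x y) = mvalD J B ξ x y)
    (a b d e : ℕ) (hab : a < b) (hbN : b ≤ N) (hde : d < e) (heN : e ≤ N)
    (hne : (a,b) ≠ (d,e)) :
    ξ (J a b) (J d e) = μ' ⁅J a b, J d e⁆ ∧ ξ (M a b) (M d e) = μ' ⁅M a b, M d e⁆ ∧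
      ξ (J a b) (M d e) = μ' ⁅J a b, M d e⁆ ∧ ξ (M a b) (J d e) = μ' ⁅M a b, J d e⁆ := by
  have flip : ∀ x y : L, ξ x y = μ' ⁅x, y⁆ → ξ y x = μ' ⁅y, x⁆ := by
    intro x y h
    have h2 : ⁅y, x⁆ = -⁅x, y⁆ := (lie_skew y x).symm
    rw [h2, map_neg, ← h]
    exact skewξ ξ hξ y x
  by_cases had : a = d
  · subst had
    rcases lt_trichotomy b e with h | h | h
    · exact cfgLeft N ω J M B ξ hbr hξ μ' hJv hMv a b e hab h heN
    · exact absurd (by rw [h]) hne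
    · obtain ⟨w1, w2, w3, w4⟩ := cfgLeft N ω J M B ξ hbr hξ μ' hJv hMv a e b hde h hbN
      exact ⟨flip _ _ w1, flip _ _ w2, flip _ _ w4, flip _ _ w3⟩
  · by_cases hbe : b = e
    · subst hbe
      rcases lt_trichotomy a d with h | h | h
      · exact cfgRight N ω J M B ξ hbr hξ μ' hJv hMv a d b h hde hbN
      · exact absurd h had
      · obtain ⟨w1, w2, w3, w4⟩ := cfgRight N ω J M B ξ hbr hξ μ' hJv hMv d a b h hab hbN
        exact ⟨flip _ _ w1, flip _ _ w2, flip _ _ w4, flip _ _ w3⟩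
    · by_cases hbd : b = d
      · subst hbd
        exact cfgMid N ω J M B ξ hbr hξ μ' hJv hMv a b e hab hde heN
      · by_cases hae : a = e
        · subst hae
          obtain ⟨w1, w2, w3, w4⟩ := cfgMid N ω J M B ξ hbr hξ μ' hJv hMv d a b hde hab hbN
          exact ⟨flip _ _ w1, flip _ _ w2, flip _ _ w4, flip _ _ w3⟩
        · exact cfgDisj N ω J M B ξ hbr hξ μ' a b d e hab hbN hde heN had hae hbd hbe

lemma jmSame (N : ℕ) (ω : ℕ → ℝ) (J M : ℕ → ℕ → L) (B : ℕ → L)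
    (ξ : L →ₗ[ℝ] L →ₗ[ℝ] ℝ) (hbr : SUBrackets N ω J M B) (hξ : IsLieCocycle ξ) :
    ∀ b a, a < b → b ≤ N →
      ξ (J a b) (M a b)
        = ∑ s ∈ Icc (a+1) b, ckW ω a (s-1) * ckW ω s b * ξ (J (s-1) s) (M (s-1) s) := by
  intro b
  induction b with
  | zero => intro a h _; omega
  | succ n ih =>
    intro a hab hbN
    by_cases han : a = n
    · subst han
      rw [Finset.Icc_self, Finset.sum_singleton, Nat.add_sub_cancel, ckW_self, ckW_self]
      ring
    · have han' : a < n := by omega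
      have hnN : n ≤ N := by omega
      have hc := hξ.2 (J a n) (J n (n+1)) (M a (n+1))
      rw [hbr.jj_mid a n (n+1) han' (by omega) hbN,
        show ⁅J n (n+1), M a (n+1)⁆ = -(ckW ω n (n+1) • M a n) by
          rw [← lie_skew, hbr.mj_right a n (n+1) han' (by omega) hbN],
        show ⁅M a (n+1), J a n⁆ = -(ckW ω a n • M n (n+1)) by
          rw [← lie_skew, hbr.jm_left a n (n+1) han' (by omega) hbN]] at hc
      simp only [map_neg, LinearMap.neg_apply, map_smul, LinearMap.smul_apply,
        smul_eq_mul] at hc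
      rw [skewξ ξ hξ (M a n) (J a n), skewξ ξ hξ (M n (n+1)) (J n (n+1))] at hc
      have recrel : ξ (J a (n+1)) (M a (n+1))
          = ckW ω n (n+1) * ξ (J a n) (M a n)
            + ckW ω a n * ξ (J n (n+1)) (M n (n+1)) := by linear_combination -hc
      rw [recrel, ih a han' hnN, Finset.mul_sum,
        Finset.sum_Icc_succ_top (by omega : a + 1 ≤ n + 1)]
      have last : ckW ω a ((n+1)-1) * ckW ω (n+1) (n+1) * ξ (J ((n+1)-1) (n+1)) (M ((n+1)-1) (n+1))
          = ckW ω a n * ξ (J n (n+1)) (M n (n+1)) := by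
        rw [Nat.add_sub_cancel, ckW_self]; ring
      rw [last]
      congr 1
      apply Finset.sum_congr rfl
      intro s hs
      have hs' := Finset.mem_Icc.mp hs
      have hmul : ckW ω s n * ckW ω n (n+1) = ckW ω s (n+1) :=
        ckW_mul ω s n (n+1) hs'.2 (by omega)
      linear_combination (ckW ω a (s-1) * ξ (J (s-1) s) (M (s-1) s)) * hmul

lemma bbOm (N : ℕ) (ω : ℕ → ℝ) (J M : ℕ → ℕ → L) (B : ℕ → L)
    (ξ : L →ₗ[ℝ] L →ₗ[ℝ] ℝ) (hbr : SUBrackets N ω J M B) (hξ : IsLieCocycle ξ)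
    (k l : ℕ) (hk1 : 1 ≤ k) (hkN : k ≤ N) (hl1 : 1 ≤ l) (hlN : l ≤ N) :
    ω k * ξ (B k) (B l) = 0 := by
  have hkk : k - 1 < k := by omega
  have hc := hξ.2 (J (k-1) k) (M (k-1) k) (B l)
  rw [hbr.jm_same (k-1) k hkk hkN, hbr.mb (k-1) k l hkk hkN hl1 hlN,
    show ⁅B l, J (k-1) k⁆ = -(ckKappa (k-1) k l • M (k-1) k) by
      rw [← lie_skew, hbr.jb (k-1) k l hkk hkN hl1 hlN],
    show Finset.Icc (k-1+1) k = {k} by rw [show k-1+1 = k from by omega, Finset.Icc_self],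
    Finset.sum_singleton, ckW_single ω k hk1] at hc
  simp only [map_smul, LinearMap.smul_apply, smul_eq_mul, map_neg, LinearMap.neg_apply,
    hξ.1] at hc
  linear_combination (-1/2 : ℝ) * hc

end SUWork



theorem su_cocycle_cohomologous_to_reduced {L : Type*} [LieRing L] [LieAlgebra ℝ L]
    (N : ℕ) (hN : 1 ≤ N) (ω : ℕ → ℝ) (J M : ℕ → ℕ → L) (B : ℕ → L)
    (hbr : SUBrackets N ω J M B) (hbasis : SUBasis N J M B)
    (ξ : L →ₗ[ℝ] L →ₗ[ℝ] ℝ) (hξ : IsLieCocycle ξ) :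
    ∃ (μ : L →ₗ[ℝ] ℝ) (α : ℕ → ℝ) (β : ℕ → ℕ → ℝ) (χ : L →ₗ[ℝ] L →ₗ[ℝ] ℝ),
      (∀ k l, 1 ≤ k → k < l → l ≤ N → ω k * β k l = 0 ∧ ω l * β k l = 0) ∧
      (∀ x, χ x x = 0) ∧
      (∀ a b d e, a < b → b ≤ N → d < e → e ≤ N → (a, b) ≠ (d, e) →
        χ (J a b) (J d e) = 0 ∧ χ (M a b) (M d e) = 0 ∧
        χ (J a b) (M d e) = 0 ∧ χ (M a b) (J d e) = 0) ∧
      (∀ a b l, a < b → b ≤ N → 1 ≤ l → l ≤ N →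
        χ (J a b) (B l) = 0 ∧ χ (M a b) (B l) = 0) ∧
      (∀ a b, a < b → b ≤ N →
        χ (J a b) (M a b) = ∑ s ∈ Finset.Icc (a + 1) b, ckW ω a (s - 1) * ckW ω s b * α s) ∧
      (∀ k l, 1 ≤ k → k < l → l ≤ N → χ (B k) (B l) = β k l) ∧
      (∀ x y, ξ x y = μ ⁅x, y⁆ + χ x y) := by
  classical
  have hbasis' : LinearIndependent ℝ (suFam N J M B) ∧
      ⊤ ≤ Submodule.span ℝ (Set.range (suFam N J M B)) := hbasis
  let bas : Module.Basis (SUIdx N) ℝ L := Module.Basis.mk hbasis'.1 hbasis'.2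
  let val : SUIdx N → ℝ := fun i =>
    match i with
    | ⟨Sum.inl (a, b), _⟩ => SUWork.jvalD M B ξ a b
    | ⟨Sum.inr (Sum.inl (a, b)), _⟩ => SUWork.mvalD J B ξ a b
    | ⟨Sum.inr (Sum.inr _), _⟩ => 0
  let μ : L →ₗ[ℝ] ℝ := bas.constr ℝ val
  have hμJ : ∀ a b, a < b → b ≤ N → μ (J a b) = SUWork.jvalD M B ξ a b := by
    intro a b u1 u2
    have hJab : J a b = bas ⟨Sum.inl (a, b), ⟨u1, u2⟩⟩ := by
      refine Eq.trans ?_ (Module.Basis.mk_apply hbasis'.1 hbasis'.2 _).symm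
      rfl
    rw [hJab]
    exact Module.Basis.constr_basis bas ℝ val _
  have hμM : ∀ a b, a < b → b ≤ N → μ (M a b) = SUWork.mvalD J B ξ a b := by
    intro a b u1 u2
    have hMab : M a b = bas ⟨Sum.inr (Sum.inl (a, b)), ⟨u1, u2⟩⟩ := by
      refine Eq.trans ?_ (Module.Basis.mk_apply hbasis'.1 hbasis'.2 _).symm
      rfl
    rw [hMab]
    exact Module.Basis.constr_basis bas ℝ val _
  have hμB : ∀ l, 1 ≤ l → l ≤ N → μ (B l) = 0 := by
    intro l u1 u2
    have hBl : B l = bas ⟨Sum.inr (Sum.inr l), ⟨u1, u2⟩⟩ := by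
      refine Eq.trans ?_ (Module.Basis.mk_apply hbasis'.1 hbasis'.2 _).symm
      rfl
    rw [hBl]
    exact Module.Basis.constr_basis bas ℝ val _
  let ν : L →ₗ[ℝ] L →ₗ[ℝ] ℝ := LinearMap.mk₂ ℝ (fun x y => μ ⁅x, y⁆)
    (fun m n x => by simp only [add_lie, map_add])
    (fun c m x => by simp only [smul_lie, map_smul])
    (fun m x y => by simp only [lie_add, map_add])
    (fun c m x => by simp only [lie_smul, map_smul])
  let χ : L →ₗ[ℝ] L →ₗ[ℝ] ℝ := ξ - ν
  have hχ : ∀ x y, χ x y = ξ x y - μ ⁅x, y⁆ := fun x y => rfl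
  refine ⟨μ, fun s => ξ (J (s-1) s) (M (s-1) s), fun k l => ξ (B k) (B l), χ,
    ?_, ?_, ?_, ?_, ?_, ?_, ?_⟩
  · intro k l hk hkl hlN
    refine ⟨SUWork.bbOm N ω J M B ξ hbr hξ k l hk (by omega) (by omega) hlN, ?_⟩
    have h1 := SUWork.bbOm N ω J M B ξ hbr hξ l k (by omega) hlN hk (by omega)
    have h2 := SUWork.skewξ ξ hξ (B k) (B l)
    show ω l * ξ (B k) (B l) = 0
    rw [h2]
    linear_combination -h1
  · intro x
    rw [hχ, hξ.1, lie_self, map_zero, sub_zero]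
  · intro a b d e hab hbN hde heN hne
    obtain ⟨w1, w2, w3, w4⟩ := SUWork.main4 N ω J M B ξ hbr hξ μ hμJ hμM
      a b d e hab hbN hde heN hne
    exact ⟨by rw [hχ, w1, sub_self], by rw [hχ, w2, sub_self],
      by rw [hχ, w3, sub_self], by rw [hχ, w4, sub_self]⟩
  · intro a b l hab hbN hl1 hlN
    constructor
    · rw [hχ, hbr.jb a b l hab hbN hl1 hlN, map_smul, smul_eq_mul, hμM a b hab hbN,
        SUWork.xiJB N ω J M B ξ hbr hξ a b l hab hbN hl1 hlN]
      ring
    · rw [hχ, hbr.mb a b l hab hbN hl1 hlN, map_neg, map_smul, smul_eq_mul, hμJ a b hab hbN,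
        SUWork.xiMB N ω J M B ξ hbr hξ a b l hab hbN hl1 hlN]
      ring
  · intro a b hab hbN
    rw [hχ, hbr.jm_same a b hab hbN, map_smul, smul_eq_mul, map_sum,
      Finset.sum_eq_zero (fun s hs => by
        have hs' := Finset.mem_Icc.mp hs
        exact hμB s (by omega) (by omega)),
      mul_zero, sub_zero]
    exact SUWork.jmSame N ω J M B ξ hbr hξ b a hab hbN
  · intro k l hk hkl hlN
    rw [hχ, hbr.bb k l hk hkl hlN, map_zero, sub_zero]
  · intro x y
    rw [hχ]
    ring
end
end

section
/- Every 2-cocycle ξ on u_ω(N+1) is cohomologous to a reduced cocycle: there exist a linear functional μ : u_ω(N+1) → ℝ and real numbers α_k, γ_k (1 ≤ k ≤ N) and β_{kl} (1 ≤ k < l ≤ N) with ω_k·β_{kl} = 0, ω_l·β_{kl} = 0 and ω_k·γ_k = 0, such that ξ(x,y) = μ([x,y]) + χ_{α,β,γ}(x,y) for all x,y, where χ_{α,β,γ} is the alternating bilinear form that vanishes on every pair of distinct basis elements except χ_{α,β,γ}(J_{ab},M_{ab}) = Σ_{s=a+1}^{b} ω_{a,s−1}ω_{s,b}·α_s for 0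 ≤ a < b ≤ N, χ_{α,β,γ}(B_k,B_l) = β_{kl} for 1 ≤ k < l ≤ N, and χ_{α,β,γ}(B_k,I) = γ_k for 1 ≤ k ≤ N. -/
open Finset

noncomputable section

set_option linter.unusedSectionVars false
section Aux
variable {L : Type*} [LieRing L] [LieAlgebra ℝ L]
variable {N : ℕ} {ω : ℕ → ℝ} {J M : ℕ → ℕ → L} {B : ℕ → L} {I : L}
variable {ξ : L →ₗ[ℝ] L →ₗ[ℝ] ℝ}

lemma xi_anti (hξ : IsLieCocycle ξ) (x y : L) : ξ y x = -ξ x y := by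
  have h := hξ.1 (x + y)
  simp only [map_add, LinearMap.add_apply, hξ.1 x, hξ.1 y] at h
  linarith

lemma lie_swap (x y : L) : ⁅x, y⁆ = -⁅y, x⁆ := (lie_skew x y).symm

lemma ckW_mul (ω : ℕ → ℝ) {a b c : ℕ} (hab : a ≤ b) (hbc : b ≤ c) :
    ckW ω a b * ckW ω b c = ckW ω a c := by
  unfold ckW
  rw [Finset.Icc_add_one_left_eq_Ioc, Finset.Icc_add_one_left_eq_Ioc, Finset.Icc_add_one_left_eq_Ioc]
  exact Finset.prod_Ioc_consecutive ω hab hbc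

lemma ckW_self (ω : ℕ → ℝ) (a : ℕ) : ckW ω a a = 1 := by
  unfold ckW
  rw [Finset.Icc_eq_empty (by omega), Finset.prod_empty]

lemma ckW_single (ω : ℕ → ℝ) {k : ℕ} (hk : 1 ≤ k) : ckW ω (k-1) k = ω k := by
  unfold ckW
  have : k - 1 + 1 = k := by omega
  rw [this, Finset.Icc_self, Finset.prod_singleton]

-- kappa values
lemma kappa_bb {a b : ℕ} (hab : a < b) :
    ckKappa a b b = if a + 1 = b then 2 else 1 := by
  unfold ckKappa
  have h1 : ¬ (b = b - 1) := by omega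
  have h2 : ¬ (a = b) := by omega
  by_cases h : a + 1 = b
  · have ha : a = b - 1 := by omega
    rw [if_pos ha, if_neg h1, if_pos rfl, if_neg h2, if_pos h]; norm_num
  · have ha : ¬ (a = b - 1) := by omega
    rw [if_neg ha, if_neg h1, if_pos rfl, if_neg h2, if_neg h]; norm_num

lemma kappa_bb_ne {a b : ℕ} (hab : a < b) : ckKappa a b b ≠ 0 := by
  rw [kappa_bb hab]; split_ifs <;> norm_num

lemma kappa_cb {a b c : ℕ} (hab : a < b) (hbc : b < c) :
    ckKappa b c b = -1 := by
  unfold ckKappa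
  have h1 : ¬ (b = b - 1) := by omega
  have h2 : ¬ (c = b - 1) := by omega
  have h3 : ¬ (c = b) := by omega
  rw [if_neg h1, if_neg h2, if_neg h3, if_pos rfl]; norm_num

lemma kappa_acc {a b c : ℕ} (hab : a < b) (hbc : b < c) : ckKappa a c c = 1 := by
  unfold ckKappa
  have h1 : ¬ (a = c - 1) := by omega
  have h2 : ¬ (c = c - 1) := by omega
  have h3 : ¬ (a = c) := by omega
  rw [if_neg h1, if_neg h2, if_pos rfl, if_neg h3]; norm_num

end Aux
section Aux2
set_option linter.unusedSectionVars false
variable {L : Type*} [LieRing L] [LieAlgebra ℝ L]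
variable {N : ℕ} {ω : ℕ → ℝ} {J M : ℕ → ℕ → L} {B : ℕ → L} {I : L}
variable {ξ : L →ₗ[ℝ] L →ₗ[ℝ] ℝ}

lemma bb0 (hbr : SUBrackets N ω J M B) {k l : ℕ} (hk1 : 1 ≤ k) (hkN : k ≤ N)
    (hl1 : 1 ≤ l) (hlN : l ≤ N) : ⁅B k, B l⁆ = 0 := by
  rcases lt_trichotomy k l with h | h | h
  · exact hbr.bb k l hk1 h hlN
  · subst h; exact lie_self _
  · rw [lie_swap, hbr.bb l k hl1 h hkN, neg_zero]

lemma l1J (hbr : SUBrackets N ω J M B) (hξ : IsLieCocycle ξ)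
    {a b l : ℕ} (hab : a < b) (hbN : b ≤ N) (hl1 : 1 ≤ l) (hlN : l ≤ N) :
    ckKappa a b b * ξ (J a b) (B l) = ckKappa a b l * ξ (J a b) (B b) := by
  have hb1 : 1 ≤ b := by omega
  have h := hξ.2 (M a b) (B l) (B b)
  rw [hbr.mb a b l hab hbN hl1 hlN, bb0 hbr hl1 hlN hb1 hbN,
    lie_swap (B b) (M a b), hbr.mb a b b hab hbN hb1 hbN] at h
  simp only [map_smul, map_neg, map_zero, LinearMap.smul_apply, LinearMap.neg_apply,
    LinearMap.zero_apply, smul_eq_mul, neg_neg] at h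
  linarith

lemma l1M (hbr : SUBrackets N ω J M B) (hξ : IsLieCocycle ξ)
    {a b l : ℕ} (hab : a < b) (hbN : b ≤ N) (hl1 : 1 ≤ l) (hlN : l ≤ N) :
    ckKappa a b b * ξ (M a b) (B l) = ckKappa a b l * ξ (M a b) (B b) := by
  have hb1 : 1 ≤ b := by omega
  have h := hξ.2 (J a b) (B l) (B b)
  rw [hbr.jb a b l hab hbN hl1 hlN, bb0 hbr hl1 hlN hb1 hbN,
    lie_swap (B b) (J a b), hbr.jb a b b hab hbN hb1 hbN] at h
  simp only [map_smul, map_neg, map_zero, LinearMap.smul_apply, LinearMap.neg_apply,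
    LinearMap.zero_apply, smul_eq_mul, neg_neg] at h
  linarith

end Aux2
section Aux3
set_option linter.unusedSectionVars false
variable {L : Type*} [LieRing L] [LieAlgebra ℝ L]
variable {N : ℕ} {ω : ℕ → ℝ} {J M : ℕ → ℕ → L} {B : ℕ → L} {I : L}
variable {ξ : L →ₗ[ℝ] L →ₗ[ℝ] ℝ}

lemma kappa_abc {a b c : ℕ} (hab : a < b) (hbc : b < c) :
    ckKappa a b c = if b + 1 = c then -1 else 0 := by
  unfold ckKappa
  have h1 : ¬ (a = c - 1) := by omega
  have h2 : ¬ (b = c) := by omega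
  have h3 : ¬ (a = c) := by omega
  by_cases h : b + 1 = c
  · have hb : b = c - 1 := by omega
    rw [if_neg h1, if_pos hb, if_neg h2, if_neg h3, if_pos h]; norm_num
  · have hb : ¬ (b = c - 1) := by omega
    rw [if_neg h1, if_neg hb, if_neg h2, if_neg h3, if_neg h]; norm_num

lemma midA (hbr : SUBrackets N ω J M B) (hξ : IsLieCocycle ξ)
    {a b c : ℕ} (hab : a < b) (hbc : b < c) (hcN : c ≤ N) :
    ξ (J a b) (J b c) = ξ (M a c) (B c) ∧ ξ (M a b) (M b c) = -ξ (M a c) (B c) := by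
  have hc1 : 1 ≤ c := by omega
  have hbN : b ≤ N := by omega
  have h1 := hξ.2 (J a b) (M b c) (B c)
  rw [hbr.jm_mid a b c hab hbc hcN, hbr.mb b c c hbc hcN hc1 hcN,
    lie_swap (B c) (J a b), hbr.jb a b c hab hbN hc1 hcN] at h1
  have h2 := hξ.2 (M a b) (J b c) (B c)
  rw [hbr.mj_mid a b c hab hbc hcN, hbr.jb b c c hbc hcN hc1 hcN,
    lie_swap (B c) (M a b), hbr.mb a b c hab hbN hc1 hcN] at h2
  simp only [map_smul, map_neg, LinearMap.smul_apply, LinearMap.neg_apply,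
    smul_eq_mul, neg_neg] at h1 h2
  rw [xi_anti hξ (J a b) (J b c)] at h1
  rw [xi_anti hξ (M a b) (M b c)] at h2
  rw [kappa_abc hab hbc, kappa_bb hbc] at h1 h2
  split_ifs at h1 h2 with h <;> norm_num at h1 h2 <;> constructor <;> linarith

lemma midB (hbr : SUBrackets N ω J M B) (hξ : IsLieCocycle ξ)
    {a b c : ℕ} (hab : a < b) (hbc : b < c) (hcN : c ≤ N) :
    ξ (J a b) (M b c) = -ξ (J a c) (B c) ∧ ξ (M a b) (J b c) = -ξ (J a c) (B c) := by
  have hc1 : 1 ≤ c := by omega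
  have hbN : b ≤ N := by omega
  have h1 := hξ.2 (J a b) (J b c) (B c)
  rw [hbr.jj_mid a b c hab hbc hcN, hbr.jb b c c hbc hcN hc1 hcN,
    lie_swap (B c) (J a b), hbr.jb a b c hab hbN hc1 hcN] at h1
  have h2 := hξ.2 (M a b) (M b c) (B c)
  rw [hbr.mm_mid a b c hab hbc hcN, hbr.mb b c c hbc hcN hc1 hcN,
    lie_swap (B c) (M a b), hbr.mb a b c hab hbN hc1 hcN] at h2
  simp only [map_smul, map_neg, LinearMap.smul_apply, LinearMap.neg_apply,
    smul_eq_mul, neg_neg] at h1 h2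
  rw [xi_anti hξ (J a b) (M b c)] at h1
  rw [xi_anti hξ (M a b) (J b c)] at h2
  rw [kappa_abc hab hbc, kappa_bb hbc] at h1 h2
  split_ifs at h1 h2 with h <;> norm_num at h1 h2 <;> constructor <;> linarith

end Aux3
section Aux4
set_option linter.unusedSectionVars false
variable {L : Type*} [LieRing L] [LieAlgebra ℝ L]
variable {N : ℕ} {ω : ℕ → ℝ} {J M : ℕ → ℕ → L} {B : ℕ → L} {I : L}
variable {ξ : L →ₗ[ℝ] L →ₗ[ℝ] ℝ}

lemma kappa_acb {a b c : ℕ} (hab : a < b) (hbc : b < c) :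
    ckKappa a c b = if a + 1 = b then 1 else 0 := by
  unfold ckKappa
  have h1 : ¬ (c = b - 1) := by omega
  have h2 : ¬ (c = b) := by omega
  have h3 : ¬ (a = b) := by omega
  by_cases h : a + 1 = b
  · have ha : a = b - 1 := by omega
    rw [if_pos ha, if_neg h1, if_neg h2, if_neg h3, if_pos h]; norm_num
  · have ha : ¬ (a = b - 1) := by omega
    rw [if_neg ha, if_neg h1, if_neg h2, if_neg h3, if_neg h]; norm_num

lemma leftA (hbr : SUBrackets N ω J M B) (hξ : IsLieCocycle ξ)
    {a b c : ℕ} (hab : a < b) (hbc : b < c) (hcN : c ≤ N) :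
    ξ (J a b) (J a c) = ckW ω a b * ξ (M b c) (B b) ∧
    ξ (M a b) (M a c) = ckW ω a b * ξ (M b c) (B b) := by
  have hb1 : 1 ≤ b := by omega
  have hbN : b ≤ N := by omega
  have h1 := hξ.2 (J a b) (M a c) (B b)
  rw [hbr.jm_left a b c hab hbc hcN, hbr.mb a c b (by omega) hcN hb1 hbN,
    lie_swap (B b) (J a b), hbr.jb a b b hab hbN hb1 hbN] at h1
  have h2 := hξ.2 (M a b) (J a c) (B b)
  rw [hbr.mj_left a b c hab hbc hcN, hbr.jb a c b (by omega) hcN hb1 hbN,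
    lie_swap (B b) (M a b), hbr.mb a b b hab hbN hb1 hbN] at h2
  simp only [map_smul, map_neg, LinearMap.smul_apply, LinearMap.neg_apply,
    smul_eq_mul, neg_neg] at h1 h2
  rw [xi_anti hξ (J a b) (J a c)] at h1
  rw [xi_anti hξ (M a b) (M a c)] at h2
  rw [kappa_acb hab hbc, kappa_bb hab] at h1 h2
  split_ifs at h1 h2 with h <;> norm_num at h1 h2 <;> constructor <;> linarith

lemma leftB (hbr : SUBrackets N ω J M B) (hξ : IsLieCocycle ξ)
    {a b c : ℕ} (hab : a < b) (hbc : b < c) (hcN : c ≤ N) :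
    ξ (J a b) (M a c) = -(ckW ω a b * ξ (J b c) (B b)) ∧
    ξ (M a b) (J a c) = ckW ω a b * ξ (J b c) (B b) := by
  have hb1 : 1 ≤ b := by omega
  have hbN : b ≤ N := by omega
  have h1 := hξ.2 (J a b) (J a c) (B b)
  rw [hbr.jj_left a b c hab hbc hcN, hbr.jb a c b (by omega) hcN hb1 hbN,
    lie_swap (B b) (J a b), hbr.jb a b b hab hbN hb1 hbN] at h1
  have h2 := hξ.2 (M a b) (M a c) (B b)
  rw [hbr.mm_left a b c hab hbc hcN, hbr.mb a c b (by omega) hcN hb1 hbN,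
    lie_swap (B b) (M a b), hbr.mb a b b hab hbN hb1 hbN] at h2
  simp only [map_smul, map_neg, LinearMap.smul_apply, LinearMap.neg_apply,
    smul_eq_mul, neg_neg] at h1 h2
  rw [xi_anti hξ (J a b) (M a c)] at h1
  rw [xi_anti hξ (M a b) (J a c)] at h2
  rw [kappa_acb hab hbc, kappa_bb hab] at h1 h2
  split_ifs at h1 h2 with h <;> norm_num at h1 h2 <;> constructor <;> linarith

lemma rightA (hbr : SUBrackets N ω J M B) (hξ : IsLieCocycle ξ)
    {a b c : ℕ} (hab : a < b) (hbc : b < c) (hcN : c ≤ N) :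
    ξ (M a c) (M b c) = ξ (J a c) (J b c) ∧
    ckKappa a b b * ξ (J a c) (J b c) = -(ckW ω b c * ξ (M a b) (B b)) := by
  have hb1 : 1 ≤ b := by omega
  have hc1 : 1 ≤ c := by omega
  have hbN : b ≤ N := by omega
  have hac : a < c := by omega
  have h1 := hξ.2 (J a c) (M b c) (B c)
  rw [hbr.jm_right a b c hab hbc hcN, hbr.mb b c c hbc hcN hc1 hcN,
    lie_swap (B c) (J a c), hbr.jb a c c hac hcN hc1 hcN] at h1
  have h2 := hξ.2 (M a c) (J b c) (B c)
  rw [hbr.mj_right a b c hab hbc hcN, hbr.jb b c c hbc hcN hc1 hcN,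
    lie_swap (B c) (M a c), hbr.mb a c c hac hcN hc1 hcN] at h2
  have h3 := hξ.2 (J a c) (M b c) (B b)
  rw [hbr.jm_right a b c hab hbc hcN, hbr.mb b c b hbc hcN hb1 hbN,
    lie_swap (B b) (J a c), hbr.jb a c b hac hcN hb1 hbN] at h3
  simp only [map_smul, map_neg, LinearMap.smul_apply, LinearMap.neg_apply,
    smul_eq_mul, neg_neg] at h1 h2 h3
  rw [xi_anti hξ (J a c) (J b c)] at h1 h3
  rw [xi_anti hξ (M a c) (M b c)] at h2
  rw [kappa_acc hab hbc, kappa_bb hbc] at h1 h2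
  rw [kappa_acb hab hbc, kappa_cb hab hbc] at h3
  rw [kappa_bb hab]
  split_ifs at h1 h2 h3 ⊢ with h h' <;> norm_num at h1 h2 h3 <;>
    constructor <;> linarith

lemma rightB (hbr : SUBrackets N ω J M B) (hξ : IsLieCocycle ξ)
    {a b c : ℕ} (hab : a < b) (hbc : b < c) (hcN : c ≤ N) :
    ξ (M a c) (J b c) = -ξ (J a c) (M b c) ∧
    ckKappa a b b * ξ (J a c) (M b c) = -(ckW ω b c * ξ (J a b) (B b)) := by
  have hb1 : 1 ≤ b := by omega
  have hc1 : 1 ≤ c := by omega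
  have hbN : b ≤ N := by omega
  have hac : a < c := by omega
  have h1 := hξ.2 (J a c) (J b c) (B c)
  rw [hbr.jj_right a b c hab hbc hcN, hbr.jb b c c hbc hcN hc1 hcN,
    lie_swap (B c) (J a c), hbr.jb a c c hac hcN hc1 hcN] at h1
  have h2 := hξ.2 (M a c) (M b c) (B c)
  rw [hbr.mm_right a b c hab hbc hcN, hbr.mb b c c hbc hcN hc1 hcN,
    lie_swap (B c) (M a c), hbr.mb a c c hac hcN hc1 hcN] at h2
  have h3 := hξ.2 (J a c) (J b c) (B b)
  rw [hbr.jj_right a b c hab hbc hcN, hbr.jb b c b hbc hcN hb1 hbN,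
    lie_swap (B b) (J a c), hbr.jb a c b hac hcN hb1 hbN] at h3
  simp only [map_smul, map_neg, LinearMap.smul_apply, LinearMap.neg_apply,
    smul_eq_mul, neg_neg] at h1 h2 h3
  rw [xi_anti hξ (J a c) (M b c)] at h1 h3
  rw [xi_anti hξ (M a c) (J b c)] at h2
  rw [kappa_acc hab hbc, kappa_bb hbc] at h1 h2
  rw [kappa_acb hab hbc, kappa_cb hab hbc] at h3
  rw [kappa_bb hab]
  split_ifs at h1 h2 h3 ⊢ with h h' <;> norm_num at h1 h2 h3 <;>
    constructor <;> linarith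

end Aux4
section Aux5
set_option linter.unusedSectionVars false
set_option maxHeartbeats 1000000
variable {L : Type*} [LieRing L] [LieAlgebra ℝ L]
variable {N : ℕ} {ω : ℕ → ℝ} {J M : ℕ → ℕ → L} {B : ℕ → L} {I : L}
variable {ξ : L →ₗ[ℝ] L →ₗ[ℝ] ℝ}

lemma kappa_off {d e l : ℕ} (hd : d ≠ l) (he : e ≠ l) :
    ckKappa d e l = (if d = l - 1 then (1:ℝ) else 0) - (if e = l - 1 then 1 else 0) := by
  unfold ckKappa
  rw [if_neg he, if_neg hd]; ring

lemma disjX (hbr : SUBrackets N ω J M B) (hξ : IsLieCocycle ξ)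
    {a b d e : ℕ} (hab : a < b) (hbN : b ≤ N) (hde : d < e) (heN : e ≤ N)
    (had : a ≠ d) (hae : a ≠ e) (hbd : b ≠ d) (hbe : b ≠ e) :
    ξ (J a b) (J d e) = 0 ∧ ξ (M a b) (M d e) = 0 ∧
    ξ (J a b) (M d e) = 0 ∧ ξ (M a b) (J d e) = 0 := by
  have hb1 : 1 ≤ b := by omega
  have he1 : 1 ≤ e := by omega
  have hz := hbr.jm_disj d e a b hde heN hab hbN had.symm hbd.symm hae.symm hbe.symm
  have hT4b := hξ.2 (M a b) (J d e) (B b)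
  rw [lie_swap (M a b) (J d e), hz, neg_zero, hbr.jb d e b hde heN hb1 hbN,
    lie_swap (B b) (M a b), hbr.mb a b b hab hbN hb1 hbN, neg_neg] at hT4b
  have hT4e := hξ.2 (M a b) (J d e) (B e)
  rw [lie_swap (M a b) (J d e), hz, neg_zero, hbr.jb d e e hde heN he1 heN,
    lie_swap (B e) (M a b), hbr.mb a b e hab hbN he1 heN, neg_neg] at hT4e
  have hmm := hbr.mm_disj a b d e hab hbN hde heN had hae hbd hbe
  have hT2b := hξ.2 (M a b) (M d e) (B b)
  rw [hmm, hbr.mb d e b hde heN hb1 hbN,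
    lie_swap (B b) (M a b), hbr.mb a b b hab hbN hb1 hbN, neg_neg] at hT2b
  have hT2e := hξ.2 (M a b) (M d e) (B e)
  rw [hmm, hbr.mb d e e hde heN he1 heN,
    lie_swap (B e) (M a b), hbr.mb a b e hab hbN he1 heN, neg_neg] at hT2e
  simp only [map_smul, map_neg, map_zero, LinearMap.smul_apply, LinearMap.neg_apply,
    LinearMap.zero_apply, smul_eq_mul, neg_neg] at hT4b hT4e hT2b hT2e
  rw [xi_anti hξ (M a b) (M d e)] at hT4b hT4e
  rw [xi_anti hξ (M a b) (J d e)] at hT2b hT2e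
  rw [kappa_bb hab, kappa_off hbd.symm hbe.symm] at hT4b hT2b
  rw [kappa_bb hde, kappa_off hae hbe] at hT4e hT2e
  split_ifs at hT4b hT4e hT2b hT2e <;>
    first
      | (exfalso; omega)
      | (refine ⟨?_, ?_, ?_, ?_⟩ <;> linarith)

end Aux5
section Aux6
set_option linter.unusedSectionVars false
variable {L : Type*} [LieRing L] [LieAlgebra ℝ L]
variable {N : ℕ} {ω : ℕ → ℝ} {J M : ℕ → ℕ → L} {B : ℕ → L} {I : L}
variable {ξ : L →ₗ[ℝ] L →ₗ[ℝ] ℝ}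

lemma jm_same_single (hbr : SUBrackets N ω J M B) {k : ℕ} (hk1 : 1 ≤ k) (hkN : k ≤ N) :
    ⁅J (k-1) k, M (k-1) k⁆ = (-(2 * ω k)) • B k := by
  rw [hbr.jm_same (k-1) k (by omega) hkN]
  have h : k - 1 + 1 = k := by omega
  rw [h, Finset.Icc_self, Finset.sum_singleton, ckW_single ω hk1]

lemma betaO (hbr : SUBrackets N ω J M B) (hξ : IsLieCocycle ξ)
    {k l : ℕ} (hk1 : 1 ≤ k) (hkN : k ≤ N) (hl1 : 1 ≤ l) (hlN : l ≤ N) :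
    ω k * ξ (B k) (B l) = 0 := by
  have h := hξ.2 (J (k-1) k) (M (k-1) k) (B l)
  rw [jm_same_single hbr hk1 hkN, hbr.mb (k-1) k l (by omega) hkN hl1 hlN,
    lie_swap (B l) (J (k-1) k), hbr.jb (k-1) k l (by omega) hkN hl1 hlN] at h
  simp only [map_smul, map_neg, LinearMap.smul_apply, LinearMap.neg_apply,
    smul_eq_mul, neg_neg, hξ.1] at h
  linarith

lemma gammaO (hbr : SUBrackets N ω J M B) (hcen : UCentral N J M B I)
    (hξ : IsLieCocycle ξ) {k : ℕ} (hk1 : 1 ≤ k) (hkN : k ≤ N) :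
    ω k * ξ (B k) I = 0 := by
  have h := hξ.2 (J (k-1) k) (M (k-1) k) I
  rw [jm_same_single hbr hk1 hkN, hcen.mcen (k-1) k (by omega) hkN,
    lie_swap I (J (k-1) k), hcen.jcen (k-1) k (by omega) hkN] at h
  simp only [map_smul, map_neg, map_zero, LinearMap.smul_apply, LinearMap.neg_apply,
    LinearMap.zero_apply, smul_eq_mul, neg_zero] at h
  linarith

lemma xiJI (hbr : SUBrackets N ω J M B) (hcen : UCentral N J M B I)
    (hξ : IsLieCocycle ξ) {a b : ℕ} (hab : a < b) (hbN : b ≤ N) :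
    ξ (J a b) I = 0 ∧ ξ (M a b) I = 0 := by
  have hb1 : 1 ≤ b := by omega
  have h1 := hξ.2 (M a b) (B b) I
  rw [hbr.mb a b b hab hbN hb1 hbN, hcen.bcen b hb1 hbN,
    lie_swap I (M a b), hcen.mcen a b hab hbN] at h1
  have h2 := hξ.2 (J a b) (B b) I
  rw [hbr.jb a b b hab hbN hb1 hbN, hcen.bcen b hb1 hbN,
    lie_swap I (J a b), hcen.jcen a b hab hbN] at h2
  simp only [map_smul, map_neg, map_zero, LinearMap.smul_apply, LinearMap.neg_apply,
    LinearMap.zero_apply, smul_eq_mul, neg_zero] at h1 h2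
  have hne : ckKappa a b b ≠ 0 := kappa_bb_ne hab
  constructor
  · have hz : ckKappa a b b * ξ (J a b) I = 0 := by linarith
    rcases mul_eq_zero.mp hz with h | h
    · exact absurd h hne
    · exact h
  · have hz : ckKappa a b b * ξ (M a b) I = 0 := by linarith
    rcases mul_eq_zero.mp hz with h | h
    · exact absurd h hne
    · exact h

end Aux6
section Aux7
set_option linter.unusedSectionVars false
variable {L : Type*} [LieRing L] [LieAlgebra ℝ L]
variable {N : ℕ} {ω : ℕ → ℝ} {J M : ℕ → ℕ → L} {B : ℕ → L} {I : L}
variable {ξ : L →ₗ[ℝ] L →ₗ[ℝ] ℝ}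

lemma djm_step (hbr : SUBrackets N ω J M B) (hξ : IsLieCocycle ξ)
    {a b c : ℕ} (hab : a < b) (hbc : b < c) (hcN : c ≤ N) :
    ξ (J a c) (M a c) = ckW ω b c * ξ (J a b) (M a b) + ckW ω a b * ξ (J b c) (M b c) := by
  have h := hξ.2 (J a b) (J b c) (M a c)
  rw [hbr.jj_mid a b c hab hbc hcN, lie_swap (J b c) (M a c),
    hbr.mj_right a b c hab hbc hcN, lie_swap (M a c) (J a b),
    hbr.jm_left a b c hab hbc hcN] at h
  simp only [map_smul, map_neg, LinearMap.smul_apply, LinearMap.neg_apply,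
    smul_eq_mul, neg_neg] at h
  rw [xi_anti hξ (J a b) (M a b), xi_anti hξ (J b c) (M b c)] at h
  linarith

lemma djm (hbr : SUBrackets N ω J M B) (hξ : IsLieCocycle ξ) :
    ∀ n a b, a < b → b ≤ N → b - a ≤ n →
    ξ (J a b) (M a b) = ∑ s ∈ Finset.Icc (a+1) b,
      ckW ω a (s-1) * ckW ω s b * ξ (J (s-1) s) (M (s-1) s) := by
  intro n
  induction n with
  | zero => intro a b hab _ hn; omega
  | succ n ih =>
    intro a b hab hbN hn
    by_cases hb : b = a + 1
    · subst hb
      rw [Finset.Icc_self, Finset.sum_singleton]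
      simp [ckW_self]
    · have hab2 : a + 1 < b := by omega
      have hIH := ih (a+1) b hab2 hbN (by omega)
      have hstep := djm_step hbr hξ (Nat.lt_succ_self a) hab2 hbN
      have hins : Finset.Icc (a+1) b = insert (a+1) (Finset.Icc (a+1+1) b) := by
        ext x; simp only [Finset.mem_Icc, Finset.mem_insert]; omega
      have hnot : a+1 ∉ Finset.Icc (a+1+1) b := by
        simp only [Finset.mem_Icc]; omega
      rw [hins, Finset.sum_insert hnot]
      have hsum : ∑ s ∈ Finset.Icc (a+1+1) b,
          ckW ω a (s-1) * ckW ω s b * ξ (J (s-1) s) (M (s-1) s)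
          = ckW ω a (a+1) * ∑ s ∈ Finset.Icc (a+1+1) b,
            ckW ω (a+1) (s-1) * ckW ω s b * ξ (J (s-1) s) (M (s-1) s) := by
        rw [Finset.mul_sum]
        apply Finset.sum_congr rfl
        intro s hs
        simp only [Finset.mem_Icc] at hs
        rw [← ckW_mul ω (by omega : a ≤ a+1) (by omega : a+1 ≤ s-1)]; ring
      rw [hsum, ← hIH]
      simp only [Nat.add_sub_cancel, ckW_self, one_mul]
      linarith [hstep]

end Aux7
set_option maxHeartbeats 1000000 in
theorem u_cocycle_cohomologous_to_reduced {L : Type*} [LieRing L] [LieAlgebra ℝ L]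
    (N : ℕ) (hN : 1 ≤ N) (ω : ℕ → ℝ) (J M : ℕ → ℕ → L) (B : ℕ → L) (I : L)
    (hbr : SUBrackets N ω J M B) (hcen : UCentral N J M B I) (hbasis : UBasis N J M B I)
    (ξ : L →ₗ[ℝ] L →ₗ[ℝ] ℝ) (hξ : IsLieCocycle ξ) :
    ∃ (μ : L →ₗ[ℝ] ℝ) (α γ : ℕ → ℝ) (β : ℕ → ℕ → ℝ) (χ : L →ₗ[ℝ] L →ₗ[ℝ] ℝ),
      (∀ k l, 1 ≤ k → k < l → l ≤ N → ω k * β k l = 0 ∧ ω l * β k l = 0) ∧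
      (∀ k, 1 ≤ k → k ≤ N → ω k * γ k = 0) ∧
      (∀ x, χ x x = 0) ∧
      (∀ a b d e, a < b → b ≤ N → d < e → e ≤ N → (a, b) ≠ (d, e) →
        χ (J a b) (J d e) = 0 ∧ χ (M a b) (M d e) = 0 ∧
        χ (J a b) (M d e) = 0 ∧ χ (M a b) (J d e) = 0) ∧
      (∀ a b l, a < b → b ≤ N → 1 ≤ l → l ≤ N →
        χ (J a b) (B l) = 0 ∧ χ (M a b) (B l) = 0) ∧
      (∀ a b, a < b → b ≤ N →
        χ (J a b) (M a b) = ∑ s ∈ Finset.Icc (a + 1) b, ckW ω a (s - 1) * ckW ω s b * α s) ∧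
      (∀ k l, 1 ≤ k → k < l → l ≤ N → χ (B k) (B l) = β k l) ∧
      (∀ a b, a < b → b ≤ N → χ (J a b) I = 0 ∧ χ (M a b) I = 0) ∧
      (∀ k, 1 ≤ k → k ≤ N → χ (B k) I = γ k) ∧
      (∀ x y, ξ x y = μ ⁅x, y⁆ + χ x y) := by
  classical
  set bas : Module.Basis (UIdx N) ℝ L := Module.Basis.mk hbasis.1 hbasis.2 with hbas
  set muVal : UIdx N → ℝ := fun i =>
    match i with
    | Sum.inl ⟨Sum.inl (p, q), _⟩ => -(ξ (M p q) (B q)) / ckKappa p q q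
    | Sum.inl ⟨Sum.inr (Sum.inl (p, q)), _⟩ => ξ (J p q) (B q) / ckKappa p q q
    | Sum.inl ⟨Sum.inr (Sum.inr _), _⟩ => 0
    | Sum.inr _ => 0
    with hmuVal
  set μ : L →ₗ[ℝ] ℝ := bas.constr ℝ muVal with hμdef
  have hbase : ∀ i : UIdx N, μ (uFam N J M B I i) = muVal i := by
    intro i
    rw [show uFam N J M B I i = bas i from (Module.Basis.mk_apply hbasis.1 hbasis.2 i).symm]
    exact bas.constr_basis ℝ muVal i
  have hμJ : ∀ p q, p < q → q ≤ N →
      μ (J p q) = -(ξ (M p q) (B q)) / ckKappa p q q := fun p q h1 h2 =>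
    hbase (Sum.inl ⟨Sum.inl (p, q), ⟨h1, h2⟩⟩)
  have hμM : ∀ p q, p < q → q ≤ N →
      μ (M p q) = ξ (J p q) (B q) / ckKappa p q q := fun p q h1 h2 =>
    hbase (Sum.inl ⟨Sum.inr (Sum.inl (p, q)), ⟨h1, h2⟩⟩)
  have hμB : ∀ s, 1 ≤ s → s ≤ N → μ (B s) = 0 := fun s h1 h2 =>
    hbase (Sum.inl ⟨Sum.inr (Sum.inr s), ⟨h1, h2⟩⟩)
  set χ : L →ₗ[ℝ] L →ₗ[ℝ] ℝ := ξ - LinearMap.mk₂ ℝ (fun x y => μ ⁅x, y⁆)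
      (fun x x' y => show μ ⁅x + x', y⁆ = μ ⁅x, y⁆ + μ ⁅x', y⁆ by rw [add_lie, map_add])
      (fun c x y => show μ ⁅c • x, y⁆ = c • μ ⁅x, y⁆ by rw [smul_lie, map_smul])
      (fun x y y' => show μ ⁅x, y + y'⁆ = μ ⁅x, y⁆ + μ ⁅x, y'⁆ by rw [lie_add, map_add])
      (fun c x y => show μ ⁅x, c • y⁆ = c • μ ⁅x, y⁆ by rw [lie_smul, map_smul])
    with hχdef
  have hχ : ∀ x y, χ x y = ξ x y - μ ⁅x, y⁆ := fun x y => rfl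
  -- antisymmetry of χ
  have hanti : ∀ x y, χ y x = -χ x y := by
    intro x y
    rw [hχ, hχ, xi_anti hξ x y, lie_swap y x, map_neg]
    ring
  -- χ with B_l
  have cJB : ∀ a b l, a < b → b ≤ N → 1 ≤ l → l ≤ N → χ (J a b) (B l) = 0 := by
    intro a b l hab hbN hl1 hlN
    have hb1 : 1 ≤ b := by omega
    rw [hχ, hbr.jb a b l hab hbN hl1 hlN, map_smul, smul_eq_mul,
      hμM a b hab hbN]
    have hL := l1J hbr hξ hab hbN hl1 hlN
    have hne := kappa_bb_ne hab
    field_simp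
    first
      | linarith
      | linear_combination hL
      | linear_combination -hL
      | linear_combination 2 * hL
      | linear_combination -(2 * hL)
  have cMB : ∀ a b l, a < b → b ≤ N → 1 ≤ l → l ≤ N → χ (M a b) (B l) = 0 := by
    intro a b l hab hbN hl1 hlN
    have hb1 : 1 ≤ b := by omega
    rw [hχ, hbr.mb a b l hab hbN hl1 hlN, map_neg, map_smul, smul_eq_mul,
      hμJ a b hab hbN]
    have hL := l1M hbr hξ hab hbN hl1 hlN
    have hne := kappa_bb_ne hab
    field_simp
    first
      | linarith
      | linear_combination hL
      | linear_combination -hL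
      | linear_combination 2 * hL
      | linear_combination -(2 * hL)
  -- chain lemmas for χ
  have cLeftJJ : ∀ a b c, a < b → b < c → c ≤ N → χ (J a b) (J a c) = 0 := by
    intro a b c hab hbc hcN
    have hb1 : 1 ≤ b := by omega
    have hbN : b ≤ N := by omega
    rw [hχ, hbr.jj_left a b c hab hbc hcN, map_smul, smul_eq_mul,
      hμJ b c hbc hcN, (leftA hbr hξ hab hbc hcN).1]
    have hL := l1M hbr hξ hbc hcN hb1 hbN
    rw [kappa_cb hab hbc] at hL
    have hne := kappa_bb_ne hbc
    field_simp
    first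
      | linarith
      | linear_combination (ckW ω a b) * hL
      | linear_combination -((ckW ω a b) * hL)
      | linear_combination 2 * (ckW ω a b) * hL
      | linear_combination -(2 * (ckW ω a b) * hL)
  have cLeftMM : ∀ a b c, a < b → b < c → c ≤ N → χ (M a b) (M a c) = 0 := by
    intro a b c hab hbc hcN
    have hb1 : 1 ≤ b := by omega
    have hbN : b ≤ N := by omega
    rw [hχ, hbr.mm_left a b c hab hbc hcN, map_smul, smul_eq_mul,
      hμJ b c hbc hcN, (leftA hbr hξ hab hbc hcN).2]
    have hL := l1M hbr hξ hbc hcN hb1 hbN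
    rw [kappa_cb hab hbc] at hL
    have hne := kappa_bb_ne hbc
    field_simp
    first
      | linarith
      | linear_combination (ckW ω a b) * hL
      | linear_combination -((ckW ω a b) * hL)
      | linear_combination 2 * (ckW ω a b) * hL
      | linear_combination -(2 * (ckW ω a b) * hL)
  have cLeftJM : ∀ a b c, a < b → b < c → c ≤ N → χ (J a b) (M a c) = 0 := by
    intro a b c hab hbc hcN
    have hb1 : 1 ≤ b := by omega
    have hbN : b ≤ N := by omega
    rw [hχ, hbr.jm_left a b c hab hbc hcN, map_smul, smul_eq_mul,
      hμM b c hbc hcN, (leftB hbr hξ hab hbc hcN).1]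
    have hL := l1J hbr hξ hbc hcN hb1 hbN
    rw [kappa_cb hab hbc] at hL
    have hne := kappa_bb_ne hbc
    field_simp
    first
      | linarith
      | linear_combination (ckW ω a b) * hL
      | linear_combination -((ckW ω a b) * hL)
      | linear_combination 2 * (ckW ω a b) * hL
      | linear_combination -(2 * (ckW ω a b) * hL)
  have cLeftMJ : ∀ a b c, a < b → b < c → c ≤ N → χ (M a b) (J a c) = 0 := by
    intro a b c hab hbc hcN
    have hb1 : 1 ≤ b := by omega
    have hbN : b ≤ N := by omega
    rw [hχ, hbr.mj_left a b c hab hbc hcN, map_neg, map_smul, smul_eq_mul,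
      hμM b c hbc hcN, (leftB hbr hξ hab hbc hcN).2]
    have hL := l1J hbr hξ hbc hcN hb1 hbN
    rw [kappa_cb hab hbc] at hL
    have hne := kappa_bb_ne hbc
    field_simp
    first
      | linarith
      | linear_combination (ckW ω a b) * hL
      | linear_combination -((ckW ω a b) * hL)
      | linear_combination 2 * (ckW ω a b) * hL
      | linear_combination -(2 * (ckW ω a b) * hL)
  have cMidJJ : ∀ a b c, a < b → b < c → c ≤ N → χ (J a b) (J b c) = 0 := by
    intro a b c hab hbc hcN
    rw [hχ, hbr.jj_mid a b c hab hbc hcN, map_neg,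
      hμJ a c (by omega) hcN, (midA hbr hξ hab hbc hcN).1, kappa_acc hab hbc]
    ring
  have cMidMM : ∀ a b c, a < b → b < c → c ≤ N → χ (M a b) (M b c) = 0 := by
    intro a b c hab hbc hcN
    rw [hχ, hbr.mm_mid a b c hab hbc hcN,
      hμJ a c (by omega) hcN, (midA hbr hξ hab hbc hcN).2, kappa_acc hab hbc]
    ring
  have cMidJM : ∀ a b c, a < b → b < c → c ≤ N → χ (J a b) (M b c) = 0 := by
    intro a b c hab hbc hcN
    rw [hχ, hbr.jm_mid a b c hab hbc hcN, map_neg,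
      hμM a c (by omega) hcN, (midB hbr hξ hab hbc hcN).1, kappa_acc hab hbc]
    ring
  have cMidMJ : ∀ a b c, a < b → b < c → c ≤ N → χ (M a b) (J b c) = 0 := by
    intro a b c hab hbc hcN
    rw [hχ, hbr.mj_mid a b c hab hbc hcN, map_neg,
      hμM a c (by omega) hcN, (midB hbr hξ hab hbc hcN).2, kappa_acc hab hbc]
    ring
  have cRightJJ : ∀ a b c, a < b → b < c → c ≤ N → χ (J a c) (J b c) = 0 := by
    intro a b c hab hbc hcN
    have hbN : b ≤ N := by omega
    rw [hχ, hbr.jj_right a b c hab hbc hcN, map_smul, smul_eq_mul,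
      hμJ a b hab hbN]
    have hR := (rightA hbr hξ hab hbc hcN).2
    have hne := kappa_bb_ne hab
    field_simp
    first
      | linarith
      | linear_combination hR
      | linear_combination -hR
      | linear_combination 2 * hR
      | linear_combination -(2 * hR)
  have cRightMM : ∀ a b c, a < b → b < c → c ≤ N → χ (M a c) (M b c) = 0 := by
    intro a b c hab hbc hcN
    have hbN : b ≤ N := by omega
    rw [hχ, hbr.mm_right a b c hab hbc hcN, map_smul, smul_eq_mul,
      hμJ a b hab hbN, (rightA hbr hξ hab hbc hcN).1]
    have hR := (rightA hbr hξ hab hbc hcN).2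
    have hne := kappa_bb_ne hab
    field_simp
    first
      | linarith
      | linear_combination hR
      | linear_combination -hR
      | linear_combination 2 * hR
      | linear_combination -(2 * hR)
  have cRightJM : ∀ a b c, a < b → b < c → c ≤ N → χ (J a c) (M b c) = 0 := by
    intro a b c hab hbc hcN
    have hbN : b ≤ N := by omega
    rw [hχ, hbr.jm_right a b c hab hbc hcN, map_neg, map_smul, smul_eq_mul,
      hμM a b hab hbN]
    have hR := (rightB hbr hξ hab hbc hcN).2
    have hne := kappa_bb_ne hab
    field_simp
    first
      | linarith
      | linear_combination hR
      | linear_combination -hR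
      | linear_combination 2 * hR
      | linear_combination -(2 * hR)
  have cRightMJ : ∀ a b c, a < b → b < c → c ≤ N → χ (M a c) (J b c) = 0 := by
    intro a b c hab hbc hcN
    have hbN : b ≤ N := by omega
    rw [hχ, hbr.mj_right a b c hab hbc hcN, map_smul, smul_eq_mul,
      hμM a b hab hbN, (rightB hbr hξ hab hbc hcN).1]
    have hR := (rightB hbr hξ hab hbc hcN).2
    have hne := kappa_bb_ne hab
    field_simp
    first
      | linarith
      | linear_combination hR
      | linear_combination -hR
      | linear_combination 2 * hR
      | linear_combination -(2 * hR)
  -- disjoint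
  have cDisj : ∀ a b d e, a < b → b ≤ N → d < e → e ≤ N →
      a ≠ d → a ≠ e → b ≠ d → b ≠ e →
      χ (J a b) (J d e) = 0 ∧ χ (M a b) (M d e) = 0 ∧
      χ (J a b) (M d e) = 0 ∧ χ (M a b) (J d e) = 0 := by
    intro a b d e hab hbN hde heN had hae hbd hbe
    have hD := disjX hbr hξ hab hbN hde heN had hae hbd hbe
    refine ⟨?_, ?_, ?_, ?_⟩
    · rw [hχ, hbr.jj_disj a b d e hab hbN hde heN had hae hbd hbe, map_zero, hD.1]; ring
    · rw [hχ, hbr.mm_disj a b d e hab hbN hde heN had hae hbd hbe, map_zero, hD.2.1]; ring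
    · rw [hχ, hbr.jm_disj a b d e hab hbN hde heN had hae hbd hbe, map_zero, hD.2.2.1]; ring
    · rw [hχ, lie_swap (M a b) (J d e),
        hbr.jm_disj d e a b hde heN hab hbN had.symm hbd.symm hae.symm hbe.symm,
        neg_zero, map_zero, hD.2.2.2]; ring
  -- generic distinct-pair lemmas
  have hJJ : ∀ a b d e, a < b → b ≤ N → d < e → e ≤ N → (a, b) ≠ (d, e) →
      χ (J a b) (J d e) = 0 := by
    intro a b d e hab hbN hde heN hne
    by_cases had : a = d
    · subst had
      have hbe : b ≠ e := fun h => hne (by rw [h])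
      rcases lt_or_gt_of_ne hbe with h | h
      · exact cLeftJJ a b e hab h heN
      · rw [hanti, cLeftJJ a e b hde h hbN, neg_zero]
    · by_cases hbe : b = e
      · subst hbe
        rcases lt_or_gt_of_ne had with h | h
        · exact cRightJJ a d b h hde hbN
        · rw [hanti, cRightJJ d a b h hab heN, neg_zero]
      · by_cases hbd : b = d
        · subst hbd
          exact cMidJJ a b e hab hde heN
        · by_cases hae : a = e
          · subst hae
            rw [hanti, cMidJJ d a b hde hab hbN, neg_zero]
          · exact (cDisj a b d e hab hbN hde heN had hae hbd hbe).1
  have hMM : ∀ a b d e, a < b → b ≤ N → d < e → e ≤ N → (a, b) ≠ (d, e) →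
      χ (M a b) (M d e) = 0 := by
    intro a b d e hab hbN hde heN hne
    by_cases had : a = d
    · subst had
      have hbe : b ≠ e := fun h => hne (by rw [h])
      rcases lt_or_gt_of_ne hbe with h | h
      · exact cLeftMM a b e hab h heN
      · rw [hanti, cLeftMM a e b hde h hbN, neg_zero]
    · by_cases hbe : b = e
      · subst hbe
        rcases lt_or_gt_of_ne had with h | h
        · exact cRightMM a d b h hde hbN
        · rw [hanti, cRightMM d a b h hab heN, neg_zero]
      · by_cases hbd : b = d
        · subst hbd
          exact cMidMM a b e hab hde heN
        · by_cases hae : a = e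
          · subst hae
            rw [hanti, cMidMM d a b hde hab hbN, neg_zero]
          · exact (cDisj a b d e hab hbN hde heN had hae hbd hbe).2.1
  have hJM : ∀ a b d e, a < b → b ≤ N → d < e → e ≤ N → (a, b) ≠ (d, e) →
      χ (J a b) (M d e) = 0 := by
    intro a b d e hab hbN hde heN hne
    by_cases had : a = d
    · subst had
      have hbe : b ≠ e := fun h => hne (by rw [h])
      rcases lt_or_gt_of_ne hbe with h | h
      · exact cLeftJM a b e hab h heN
      · rw [hanti, cLeftMJ a e b hde h hbN, neg_zero]
    · by_cases hbe : b = e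
      · subst hbe
        rcases lt_or_gt_of_ne had with h | h
        · exact cRightJM a d b h hde hbN
        · rw [hanti, cRightMJ d a b h hab heN, neg_zero]
      · by_cases hbd : b = d
        · subst hbd
          exact cMidJM a b e hab hde heN
        · by_cases hae : a = e
          · subst hae
            rw [hanti, cMidMJ d a b hde hab hbN, neg_zero]
          · exact (cDisj a b d e hab hbN hde heN had hae hbd hbe).2.2.1
  refine ⟨μ, fun s => ξ (J (s-1) s) (M (s-1) s), fun k => ξ (B k) I,
    fun k l => ξ (B k) (B l), χ, ?_, ?_, ?_, ?_, ?_, ?_, ?_, ?_, ?_, ?_⟩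
  · -- beta conditions
    intro k l hk1 hkl hlN
    constructor
    · exact betaO hbr hξ hk1 (by omega) (by omega) hlN
    · have h := betaO hbr hξ (by omega : 1 ≤ l) hlN hk1 (by omega : k ≤ N)
      rw [xi_anti hξ (B k) (B l)] at h
      linarith
  · -- gamma conditions
    intro k hk1 hkN
    exact gammaO hbr hcen hξ hk1 hkN
  · -- alternating
    intro x
    rw [hχ, hξ.1, lie_self, map_zero, sub_zero]
  · -- distinct pairs
    intro a b d e hab hbN hde heN hne
    have hne' : (d, e) ≠ (a, b) := fun h => hne (by rw [Prod.mk.injEq] at h ⊢; exact ⟨h.1.symm, h.2.symm⟩)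
    refine ⟨hJJ a b d e hab hbN hde heN hne, hMM a b d e hab hbN hde heN hne,
      hJM a b d e hab hbN hde heN hne, ?_⟩
    rw [hanti, hJM d e a b hde heN hab hbN hne', neg_zero]
  · -- J/M with B
    intro a b l hab hbN hl1 hlN
    exact ⟨cJB a b l hab hbN hl1 hlN, cMB a b l hab hbN hl1 hlN⟩
  · -- J M same pair
    intro a b hab hbN
    rw [hχ, hbr.jm_same a b hab hbN, map_smul, smul_eq_mul, map_sum]
    rw [Finset.sum_congr rfl (fun s hs => by
      simp only [Finset.mem_Icc] at hs
      exact hμB s (by omega) (by omega))]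
    rw [Finset.sum_const, smul_zero, mul_zero, sub_zero]
    exact djm hbr hξ b a b hab hbN (by omega)
  · -- B B
    intro k l hk1 hkl hlN
    rw [hχ, hbr.bb k l hk1 hkl hlN, map_zero, sub_zero]
  · -- J/M with I
    intro a b hab hbN
    have h := xiJI hbr hcen hξ hab hbN
    constructor
    · rw [hχ, hcen.jcen a b hab hbN, map_zero, h.1, sub_zero]
    · rw [hχ, hcen.mcen a b hab hbN, map_zero, h.2, sub_zero]
  · -- B I
    intro k hk1 hkN
    rw [hχ, hcen.bcen k hk1 hkN, map_zero, sub_zero]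
  · -- decomposition
    intro x y
    rw [hχ]; ring
end
end
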